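/- arXiv:2006.09697 — 4 statements merged into one kernel-verified Lean document; each statement's English description precedes it below -/
import Mathlib

section
/- Fix sequences of positive integers N(n), k(n) and f(n) with 1 ≤ f(n) ≤ N(n) for all n, with N(n) → ∞ as n → ∞, and such that f is either bounded or tends to ∞. For each n let (X_1,…,X_{N(n)}) be the colour-count vector of the Pólya urn model with N(n) colours and k(n) draws, and set X_*(n) := min_{1 ≤ i ≤ f(n)} X_i. Then: (i) if k = ω(N·f), then X_*(n) = Θ_p(k(n)/(N(n)·f(n))); (ii) if k = O(N·f), then X_*(n) = O_p(1). -/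
attribute [local instance] Classical.propDecidable

/-- The set of colour-count vectors of the Pólya urn with `N` colours and `k` draws:
all `(v_1, …, v_N) ∈ ℤ_{≥0}^N` with `v_1 + ⋯ + v_N = k`.  The colour-count vector
`(X_1, …, X_N)` is uniformly distributed on this set. -/
def urnSet (N k : ℕ) : Finset (Fin N → ℕ) :=
  (Fintype.piFinset fun _ => Finset.range (k + 1)).filter fun v => ∑ i, v i = k

/-- The probability, in the Pólya urn model with `N` colours and `k` draws, that the
colour-count vector `(X_1, …, X_N)` satisfies the predicate `p`, expressed as a
counting ratio over the uniform distribution on `urnSet N k`. -/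
noncomputable def urnProb (N k : ℕ) (p : (Fin N → ℕ) → Prop) : ℝ :=
  ((urnSet N k).filter p).card / (urnSet N k).card

/-- `X_* = min_{1 ≤ i ≤ f} X_i`: the minimum of the counts of the first `f` colours. -/
noncomputable def minCount {N : ℕ} (f : ℕ) (v : Fin N → ℕ) : ℕ :=
  sInf {m : ℕ | ∃ i : Fin N, (i : ℕ) < f ∧ v i = m}

open Filter Finset

namespace PolyaAux

lemma mem_urnSet {N k : ℕ} {v : Fin N → ℕ} : v ∈ urnSet N k ↔ ∑ i, v i = k := by
  constructor
  · intro h; exact (Finset.mem_filter.1 h).2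
  · intro h
    refine Finset.mem_filter.2 ⟨?_, h⟩
    refine Fintype.mem_piFinset.2 fun i => ?_
    rw [Finset.mem_range, Nat.lt_succ_iff, ← h]
    exact Finset.single_le_sum (fun j _ => Nat.zero_le _) (Finset.mem_univ i)

lemma urnSet_card (N k : ℕ) : (urnSet N k).card = (N + k - 1).choose k := by
  have h1 : Nat.card {v : Fin N → ℕ // ∑ i, v i = k} = Nat.card (Sym (Fin N) k) :=
    Nat.card_congr (Sym.equivNatSumOfFintype (Fin N) k).symm
  have h2 : Nat.card (Sym (Fin N) k) = (N + k - 1).choose k := by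
    rw [Nat.card_eq_fintype_card, Sym.card_sym_eq_choose, Fintype.card_fin]
  have h3 : Nat.card {v : Fin N → ℕ // ∑ i, v i = k} = (urnSet N k).card := by
    rw [← Fintype.card_coe (urnSet N k), ← Nat.card_eq_fintype_card]
    exact Nat.card_congr (Equiv.subtypeEquivRight (fun v => (mem_urnSet (N := N) (k := k)).symm))
  rw [← h3, h1, h2]

def pr (r m : ℕ) : ℕ := ∏ j ∈ Finset.range r, (m + 1 + j)

lemma choose_mul_factorial_eq (r m : ℕ) : (m + r).choose r * r.factorial = pr r m := by
  induction r with
  | zero => simp [pr]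
  | succ r ih =>
    have h2 : (m + r + 1).choose (r + 1) * (r + 1) = (m + r + 1) * (m + r).choose r := by
      rw [← Nat.add_one_mul_choose_eq]
    have : pr (r + 1) m = pr r m * (m + 1 + r) := by
      rw [pr, Finset.prod_range_succ]; rfl
    rw [this, ← ih, Nat.factorial_succ]
    have hmr : m + (r + 1) = m + r + 1 := by omega
    rw [hmr]
    calc (m + r + 1).choose (r + 1) * ((r + 1) * r.factorial)
        = ((m + r + 1).choose (r + 1) * (r + 1)) * r.factorial := by ring
      _ = ((m + r + 1) * (m + r).choose r) * r.factorial := by rw [h2]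
      _ = (m + r).choose r * r.factorial * (m + 1 + r) := by ring

lemma urnSet_card' (r m : ℕ) : (urnSet (r+1) m).card * r.factorial = pr r m := by
  rw [urnSet_card]
  have h : r + 1 + m - 1 = m + r := by omega
  rw [h]
  have h2 : (m + r).choose m = (m + r).choose r := by
    have := Nat.choose_symm (Nat.le_add_right m r)
    rw [Nat.add_sub_cancel_left] at this
    exact this.symm
  rw [h2, choose_mul_factorial_eq]

lemma pr_pos (r m : ℕ) : 0 < pr r m := Finset.prod_pos (fun j _ => by omega)

lemma urnSet_card_pos (r m : ℕ) : 0 < (urnSet (r+1) m).card := by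
  by_contra h
  have h0 : (urnSet (r+1) m).card = 0 := by omega
  have := urnSet_card' r m
  rw [h0] at this
  have := pr_pos r m
  omega

lemma pr_mul_pow_le (r m k : ℕ) (h : m ≤ k) :
    pr r m * (k + r) ^ r ≤ pr r k * (m + r) ^ r := by
  have e1 : pr r m * (k + r) ^ r = ∏ j ∈ Finset.range r, (m + 1 + j) * (k + r) := by
    rw [Finset.prod_mul_distrib, Finset.prod_const, Finset.card_range, pr]
  have e2 : pr r k * (m + r) ^ r = ∏ j ∈ Finset.range r, (k + 1 + j) * (m + r) := by
    rw [Finset.prod_mul_distrib, Finset.prod_const, Finset.card_range, pr]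
  rw [e1, e2]
  apply Finset.prod_le_prod' 
  intro j hj
  have hj' : j + 1 ≤ r := Finset.mem_range.1 hj
  obtain ⟨d, rfl⟩ : ∃ d, r = (j + 1) + d := ⟨r - (j + 1), by omega⟩
  have h1 : m * d ≤ k * d := Nat.mul_le_mul_right d h
  nlinarith [h1, h]

lemma pr_mul_pow_le' (r m k : ℕ) (h : m ≤ k) :
    pr r k * m ^ r ≤ pr r m * k ^ r := by
  have e1 : pr r k * m ^ r = ∏ j ∈ Finset.range r, (k + 1 + j) * m := by
    rw [Finset.prod_mul_distrib, Finset.prod_const, Finset.card_range, pr]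
  have e2 : pr r m * k ^ r = ∏ j ∈ Finset.range r, (m + 1 + j) * k := by
    rw [Finset.prod_mul_distrib, Finset.prod_const, Finset.card_range, pr]
  rw [e1, e2]
  apply Finset.prod_le_prod'
  intro j hj
  have h1 : (j + 1) * m ≤ (j + 1) * k := Nat.mul_le_mul_left (j + 1) h
  nlinarith [h1, h]

end PolyaAux

namespace PolyaAux

lemma ratio_exp_le (r m k : ℕ) (h : m ≤ k) (hk : 1 ≤ k) :
    ((urnSet (r+1) m).card : ℝ) / ((urnSet (r+1) k).card : ℝ) ≤
      Real.exp (-(r : ℝ) * ((k : ℝ) - (m : ℝ)) / ((k : ℝ) + (r : ℝ))) := by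
  have hkr : (0:ℝ) < (k:ℝ) + r := by
    have : (1:ℝ) ≤ (k:ℝ) := by exact_mod_cast hk
    positivity
  have hcardk : (0:ℝ) < ((urnSet (r+1) k).card : ℝ) := by
    exact_mod_cast urnSet_card_pos r k
  -- nat inequality transported
  have hnat : ((urnSet (r+1) m).card * r.factorial) * (k + r) ^ r ≤
      ((urnSet (r+1) k).card * r.factorial) * (m + r) ^ r := by
    rw [urnSet_card', urnSet_card']
    exact pr_mul_pow_le r m k h
  have hreal : ((urnSet (r+1) m).card : ℝ) * ((k:ℝ) + r) ^ r ≤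
      ((urnSet (r+1) k).card : ℝ) * ((m:ℝ) + r) ^ r := by
    have hfac : (0:ℝ) < (r.factorial : ℝ) := by exact_mod_cast r.factorial_pos
    have hcast : (((urnSet (r+1) m).card : ℝ) * (r.factorial : ℝ)) * ((k:ℝ) + r) ^ r ≤
        (((urnSet (r+1) k).card : ℝ) * (r.factorial : ℝ)) * ((m:ℝ) + r) ^ r := by
      exact_mod_cast hnat
    nlinarith [hcast, hfac]
  have h2 : ((urnSet (r+1) m).card : ℝ) / ((urnSet (r+1) k).card : ℝ) ≤
      (((m:ℝ) + r) / ((k:ℝ) + r)) ^ r := by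
    rw [div_le_iff₀ hcardk, div_pow]
    rw [div_mul_eq_mul_div, le_div_iff₀ (by positivity)]
    nlinarith [hreal]
  have hbase : ((m:ℝ) + r) / ((k:ℝ) + r) ≤ Real.exp (-(((k:ℝ) - m) / ((k:ℝ) + r))) := by
    have h1 : ((m:ℝ) + r) / ((k:ℝ) + r) = 1 - ((k:ℝ) - m) / ((k:ℝ) + r) := by
      field_simp
      ring
    rw [h1]
    have := Real.add_one_le_exp (-(((k:ℝ) - m) / ((k:ℝ) + r)))
    linarith
  have hbnn : (0:ℝ) ≤ ((m:ℝ) + r) / ((k:ℝ) + r) := by positivity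
  refine h2.trans ((pow_le_pow_left₀ hbnn hbase r).trans ?_)
  rw [← Real.exp_nat_mul]
  exact le_of_eq (by congr 1; ring)

lemma ratio_ge (r s k : ℕ) (hs : s ≤ k) (hk : 1 ≤ k) :
    1 - (r : ℝ) * (s : ℝ) / (k : ℝ) ≤
      ((urnSet (r+1) (k - s)).card : ℝ) / ((urnSet (r+1) k).card : ℝ) := by
  have hkpos : (0:ℝ) < (k:ℝ) := by exact_mod_cast hk
  have hcardk : (0:ℝ) < ((urnSet (r+1) k).card : ℝ) := by
    exact_mod_cast urnSet_card_pos r k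
  set m := k - s with hm
  have hmk : (m:ℝ) = (k:ℝ) - (s:ℝ) := by
    rw [hm]; push_cast [Nat.cast_sub hs]; ring
  have hnat : ((urnSet (r+1) k).card * r.factorial) * m ^ r ≤
      ((urnSet (r+1) m).card * r.factorial) * k ^ r := by
    rw [urnSet_card', urnSet_card']
    exact pr_mul_pow_le' r m k (by omega)
  have hreal : ((urnSet (r+1) k).card : ℝ) * ((m:ℝ)) ^ r ≤
      ((urnSet (r+1) m).card : ℝ) * ((k:ℝ)) ^ r := by
    have hfac : (0:ℝ) < (r.factorial : ℝ) := by exact_mod_cast r.factorial_pos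
    have hcast : (((urnSet (r+1) k).card : ℝ) * (r.factorial : ℝ)) * ((m:ℝ)) ^ r ≤
        (((urnSet (r+1) m).card : ℝ) * (r.factorial : ℝ)) * ((k:ℝ)) ^ r := by
      exact_mod_cast hnat
    nlinarith [hcast, hfac]
  have h2 : ((m:ℝ) / (k:ℝ)) ^ r ≤
      ((urnSet (r+1) m).card : ℝ) / ((urnSet (r+1) k).card : ℝ) := by
    rw [div_pow, div_le_div_iff₀ (by positivity) hcardk]
    nlinarith [hreal]
  have h3 : 1 - (r : ℝ) * (s : ℝ) / (k : ℝ) ≤ ((m:ℝ) / (k:ℝ)) ^ r := by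
    have hsk : (s:ℝ) / (k:ℝ) ≤ 1 := by
      rw [div_le_one hkpos]; exact_mod_cast hs
    have hb : (-2:ℝ) ≤ -((s:ℝ)/(k:ℝ)) := by linarith
    have := one_add_mul_le_pow hb r
    have he : (1:ℝ) + -((s:ℝ)/(k:ℝ)) = (m:ℝ)/(k:ℝ) := by
      rw [hmk]; field_simp
      ring
    rw [he] at this
    calc 1 - (r : ℝ) * (s : ℝ) / (k : ℝ) = 1 + (r:ℝ) * -((s:ℝ)/(k:ℝ)) := by ring
      _ ≤ ((m:ℝ) / (k:ℝ)) ^ r := this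
  linarith

lemma card_filter_ge (N k t : ℕ) (S : Finset (Fin N)) (h : t * S.card ≤ k) :
    ((urnSet N k).filter (fun v => ∀ i ∈ S, t ≤ v i)).card = (urnSet N (k - t * S.card)).card := by
  have hsum : ∀ (c : ℕ), (∑ i : Fin N, if i ∈ S then c else 0) = c * S.card := by
    intro c
    rw [Finset.sum_ite_mem, Finset.univ_inter, Finset.sum_const, smul_eq_mul, Nat.mul_comm]
  apply Finset.card_bij' (fun v _ => fun i => v i - if i ∈ S then t else 0)
      (fun w _ => fun i => w i + if i ∈ S then t else 0)
  · intro v hv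
    obtain ⟨hvU, hcond⟩ := Finset.mem_filter.1 hv
    rw [mem_urnSet]
    have hle : ∀ i : Fin N, (if i ∈ S then t else 0) ≤ v i := by
      intro i; split
      · next hi => exact hcond i hi
      · exact Nat.zero_le _
    rw [Finset.sum_tsub_distrib Finset.univ (fun i _ => hle i), hsum, mem_urnSet.1 hvU]
  · intro w hw
    refine Finset.mem_filter.2 ⟨?_, ?_⟩
    · rw [mem_urnSet, Finset.sum_add_distrib, hsum, mem_urnSet.1 hw, Nat.sub_add_cancel h]
    · intro i hi; simp [hi]
  · intro v hv
    obtain ⟨hvU, hcond⟩ := Finset.mem_filter.1 hv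
    funext i
    by_cases hi : i ∈ S
    · simp only [hi, if_true]
      exact Nat.sub_add_cancel (hcond i hi)
    · simp [hi]
  · intro w hw
    funext i
    by_cases hi : i ∈ S <;> simp [hi]

lemma filter_ge_empty (N k t : ℕ) (S : Finset (Fin N)) (h : k < t * S.card) :
    ((urnSet N k).filter (fun v => ∀ i ∈ S, t ≤ v i)) = ∅ := by
  rw [Finset.filter_eq_empty_iff]
  intro v hv hcond
  have h1 : ∑ i ∈ S, t ≤ ∑ i ∈ S, v i := Finset.sum_le_sum (fun i hi => hcond i hi)
  have h2 : ∑ i ∈ S, v i ≤ ∑ i, v i :=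
    Finset.sum_le_sum_of_subset (Finset.subset_univ S)
  rw [Finset.sum_const, smul_eq_mul] at h1
  rw [mem_urnSet.1 hv] at h2
  have : S.card * t = t * S.card := Nat.mul_comm _ _
  omega

lemma card_seg (N f : ℕ) (h : f ≤ N) :
    ((Finset.univ : Finset (Fin N)).filter (fun i : Fin N => (i : ℕ) < f)).card = f := by
  have he : ((Finset.univ : Finset (Fin N)).filter (fun i : Fin N => (i : ℕ) < f)) =
      (Finset.range f).attachFin (fun m hm => lt_of_lt_of_le (Finset.mem_range.1 hm) h) := by
    ext i
    simp [Finset.mem_attachFin]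
  rw [he, Finset.card_attachFin, Finset.card_range]

end PolyaAux

namespace PolyaAux

lemma urnCard_pos' (N k : ℕ) (hN : 1 ≤ N) : 0 < (urnSet N k).card := by
  obtain ⟨r, rfl⟩ : ∃ r, N = r + 1 := ⟨N - 1, by omega⟩
  exact urnSet_card_pos r k

lemma urnProb_nonneg (N k : ℕ) (p : (Fin N → ℕ) → Prop) : 0 ≤ urnProb N k p := by
  unfold urnProb; positivity

lemma urnProb_mono {N k : ℕ} {p q : (Fin N → ℕ) → Prop} (h : ∀ v, p v → q v) :
    urnProb N k p ≤ urnProb N k q := by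
  unfold urnProb
  have hsub : (urnSet N k).filter p ⊆ (urnSet N k).filter q := by
    intro v hv
    obtain ⟨h1, h2⟩ := Finset.mem_filter.1 hv
    exact Finset.mem_filter.2 ⟨h1, h v h2⟩
  have hc : (((urnSet N k).filter p).card : ℝ) ≤ (((urnSet N k).filter q).card : ℝ) := by
    exact_mod_cast Finset.card_le_card hsub
  exact div_le_div_of_nonneg_right hc (Nat.cast_nonneg _)

lemma urnProb_eq_card (N k : ℕ) (p : (Fin N → ℕ) → Prop) [DecidablePred p] :
    urnProb N k p = (((urnSet N k).filter p).card : ℝ) / ((urnSet N k).card : ℝ) := by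
  unfold urnProb
  rw [Finset.filter_congr_decidable]

lemma urnProb_compl (N k : ℕ) (hN : 1 ≤ N) (p : (Fin N → ℕ) → Prop) :
    urnProb N k p = 1 - urnProb N k (fun v => ¬ p v) := by
  have hcard : (0:ℝ) < ((urnSet N k).card : ℝ) := by
    exact_mod_cast urnCard_pos' N k hN
  rw [urnProb_eq_card, urnProb_eq_card]
  have hsplit : ((urnSet N k).filter p).card + ((urnSet N k).filter (fun v => ¬ p v)).card
      = (urnSet N k).card := Finset.card_filter_add_card_filter_not p
  have h1 : (((urnSet N k).filter p).card : ℝ) + (((urnSet N k).filter (fun v => ¬ p v)).card : ℝ)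
      = ((urnSet N k).card : ℝ) := by exact_mod_cast hsplit
  have h2 : (((urnSet N k).filter p).card : ℝ) / ((urnSet N k).card : ℝ) +
      (((urnSet N k).filter (fun v => ¬ p v)).card : ℝ) / ((urnSet N k).card : ℝ) = 1 := by
    rw [← add_div, h1, div_self (ne_of_gt hcard)]
  linarith

lemma minCount_le {N f : ℕ} (v : Fin N → ℕ) {i : Fin N} (hi : (i : ℕ) < f) :
    minCount f v ≤ v i :=
  Nat.sInf_le ⟨i, hi, rfl⟩

lemma exists_minCount {N f : ℕ} (hf : 1 ≤ f) (hfN : f ≤ N) (v : Fin N → ℕ) :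
    ∃ i : Fin N, (i : ℕ) < f ∧ v i = minCount f v := by
  have hN : 0 < N := lt_of_lt_of_le hf hfN
  have hne : {m : ℕ | ∃ i : Fin N, (i : ℕ) < f ∧ v i = m}.Nonempty :=
    ⟨v ⟨0, hN⟩, ⟨⟨0, hN⟩, hf, rfl⟩⟩
  exact Nat.sInf_mem hne

lemma le_minCount {N f t : ℕ} (hf : 1 ≤ f) (hfN : f ≤ N) (v : Fin N → ℕ)
    (h : ∀ i : Fin N, (i : ℕ) < f → t ≤ v i) : t ≤ minCount f v := by
  obtain ⟨i, hi, hvi⟩ := exists_minCount hf hfN v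
  rw [← hvi]
  exact h i hi

lemma master_ub (N k f : ℕ) (hN : 1 ≤ N) (hk : 1 ≤ k) (hf : 1 ≤ f) (hfN : f ≤ N)
    (T : ℝ) (hT : 0 ≤ T) :
    1 - Real.exp (-(((N:ℝ) - 1) * (T * (f:ℝ))) / ((k:ℝ) + (N:ℝ) - 1)) ≤
      urnProb N k (fun v => (minCount f v : ℝ) ≤ T) := by
  obtain ⟨r, rfl⟩ : ∃ r, N = r + 1 := ⟨N - 1, by omega⟩
  rw [urnProb_compl _ _ (by omega)]
  have hcast1 : ((r + 1 : ℕ) : ℝ) - 1 = (r : ℝ) := by push_cast; ring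
  have hcast2 : (k : ℝ) + ((r + 1 : ℕ) : ℝ) - 1 = (k : ℝ) + (r : ℝ) := by push_cast; ring
  rw [hcast1, hcast2]
  suffices hkey : urnProb (r+1) k (fun v => ¬ ((minCount f v : ℝ) ≤ T)) ≤
      Real.exp (-((r:ℝ) * (T * (f:ℝ))) / ((k:ℝ) + (r:ℝ))) by linarith
  set t : ℕ := Nat.floor T + 1 with ht
  set seg := (Finset.univ : Finset (Fin (r+1))).filter (fun i : Fin (r+1) => (i : ℕ) < f)
    with hseg
  have hsegcard : seg.card = f := card_seg (r+1) f hfN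
  have hmono : urnProb (r+1) k (fun v => ¬ ((minCount f v : ℝ) ≤ T)) ≤
      urnProb (r+1) k (fun v => ∀ i ∈ seg, t ≤ v i) := by
    apply urnProb_mono
    intro v hv i hi
    rw [hseg, Finset.mem_filter] at hi
    push_neg at hv
    have h1 : Nat.floor T < minCount f v := by
      rw [Nat.floor_lt hT]; exact hv
    have h2 : t ≤ minCount f v := by omega
    exact le_trans h2 (minCount_le v hi.2)
  refine hmono.trans ?_
  by_cases hc : t * f ≤ k
  · have hcard := card_filter_ge (r+1) k t seg (by rwa [hsegcard])
    rw [hsegcard] at hcard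
    rw [urnProb_eq_card, hcard]
    have hle := ratio_exp_le r (k - t * f) k (Nat.sub_le _ _) hk
    refine hle.trans ?_
    apply Real.exp_le_exp.2
    have hsub : ((k - t * f : ℕ) : ℝ) = (k : ℝ) - (t : ℝ) * (f : ℝ) := by
      push_cast [Nat.cast_sub hc]; ring
    rw [hsub]
    have hTt : T ≤ (t : ℝ) := by
      rw [ht]; push_cast
      exact le_of_lt (Nat.lt_floor_add_one T)
    have hkr : (0:ℝ) < (k:ℝ) + (r:ℝ) := by
      have : (1:ℝ) ≤ (k:ℝ) := by exact_mod_cast hk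
      positivity
    rw [div_le_div_iff_of_pos_right hkr]
    have hf0 : (0:ℝ) ≤ (f:ℝ) := Nat.cast_nonneg f
    have hr0 : (0:ℝ) ≤ (r:ℝ) := Nat.cast_nonneg r
    nlinarith [mul_le_mul_of_nonneg_left hTt (mul_nonneg hr0 hf0)]
  · rw [urnProb_eq_card, filter_ge_empty (r+1) k t seg (by rw [hsegcard]; omega)]
    simp only [Finset.card_empty, Nat.cast_zero, zero_div]
    positivity

end PolyaAux

namespace PolyaAux

lemma urnSet_card_mono (r : ℕ) {a b : ℕ} (h : a ≤ b) :
    (urnSet (r+1) a).card ≤ (urnSet (r+1) b).card := by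
  have hpr : pr r a ≤ pr r b := by
    apply Finset.prod_le_prod'
    intro j _; omega
  have h1 := urnSet_card' r a
  have h2 := urnSet_card' r b
  have hfac := r.factorial_pos
  have h3 : (urnSet (r+1) a).card * r.factorial ≤ (urnSet (r+1) b).card * r.factorial := by
    rw [h1, h2]; exact hpr
  exact Nat.le_of_mul_le_mul_right h3 hfac

lemma master_lb (N k f s : ℕ) (hN : 1 ≤ N) (hk : 1 ≤ k) (hf : 1 ≤ f) (hfN : f ≤ N)
    (hs : s ≤ k) :
    1 - (f:ℝ) * (((N:ℝ) - 1) * (s:ℝ) / (k:ℝ)) ≤ urnProb N k (fun v => s ≤ minCount f v) := by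
  obtain ⟨r, rfl⟩ : ∃ r, N = r + 1 := ⟨N - 1, by omega⟩
  have hcast1 : ((r + 1 : ℕ) : ℝ) - 1 = (r : ℝ) := by push_cast; ring
  rw [hcast1, urnProb_compl _ _ (by omega)]
  suffices hkey : urnProb (r+1) k (fun v => ¬ s ≤ minCount f v) ≤
      (f:ℝ) * ((r:ℝ) * (s:ℝ) / (k:ℝ)) by linarith
  have hmono : urnProb (r+1) k (fun v => ¬ s ≤ minCount f v) ≤
      urnProb (r+1) k (fun v => ∃ i : Fin (r+1), (i:ℕ) < f ∧ v i < s) := by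
    apply urnProb_mono
    intro v hv
    obtain ⟨i, hi, hvi⟩ := exists_minCount hf hfN v
    exact ⟨i, hi, by rw [hvi]; exact Nat.not_le.1 hv⟩
  refine hmono.trans ?_
  rw [urnProb_eq_card]
  set seg := (Finset.univ : Finset (Fin (r+1))).filter (fun i : Fin (r+1) => (i : ℕ) < f)
    with hseg
  have hsegcard : seg.card = f := card_seg (r+1) f hfN
  have hsub : (urnSet (r+1) k).filter (fun v => ∃ i : Fin (r+1), (i:ℕ) < f ∧ v i < s) ⊆
      seg.biUnion (fun i => (urnSet (r+1) k).filter (fun v => v i < s)) := by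
    intro v hv
    obtain ⟨hvU, i, hif, his⟩ : v ∈ urnSet (r+1) k ∧
        ∃ i : Fin (r+1), (i:ℕ) < f ∧ v i < s := Finset.mem_filter.1 hv
    refine Finset.mem_biUnion.2 ⟨i, ?_, Finset.mem_filter.2 ⟨hvU, his⟩⟩
    rw [hseg]
    exact Finset.mem_filter.2 ⟨Finset.mem_univ _, hif⟩
  have heach : ∀ i : Fin (r+1),
      ((urnSet (r+1) k).filter (fun v => v i < s)).card ≤
        (urnSet (r+1) k).card - (urnSet (r+1) (k - s)).card := by
    intro i
    have h2 := card_filter_ge (r+1) k s ({i} : Finset (Fin (r+1))) (by simpa using hs)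
    simp only [Finset.card_singleton, Nat.mul_one] at h2
    have h1 : ((urnSet (r+1) k).filter (fun v => s ≤ v i)).card =
        (urnSet (r+1) (k - s)).card := by
      rw [← h2]
      congr 1
      apply Finset.filter_congr
      intro v _
      simp
    have h3 := Finset.card_filter_add_card_filter_not
      (s := urnSet (r+1) k) (fun v => s ≤ v i)
    have h4 : ((urnSet (r+1) k).filter (fun v => ¬ s ≤ v i)).card =
        ((urnSet (r+1) k).filter (fun v => v i < s)).card := by
      congr 1
      apply Finset.filter_congr
      intro v _
      simp [Nat.not_le]
    rw [← h4, ← h1]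
    exact Nat.le_sub_of_add_le (Nat.le_of_eq (by rw [Nat.add_comm]; exact h3))
  have hcardbound : ((urnSet (r+1) k).filter
      (fun v => ∃ i : Fin (r+1), (i:ℕ) < f ∧ v i < s)).card ≤
      f * ((urnSet (r+1) k).card - (urnSet (r+1) (k - s)).card) := by
    calc ((urnSet (r+1) k).filter (fun v => ∃ i : Fin (r+1), (i:ℕ) < f ∧ v i < s)).card
        ≤ (seg.biUnion (fun i => (urnSet (r+1) k).filter (fun v => v i < s))).card :=
          Finset.card_le_card hsub
      _ ≤ ∑ i ∈ seg, ((urnSet (r+1) k).filter (fun v => v i < s)).card :=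
          Finset.card_biUnion_le
      _ ≤ ∑ _i ∈ seg, ((urnSet (r+1) k).card - (urnSet (r+1) (k - s)).card) :=
          Finset.sum_le_sum (fun i _ => heach i)
      _ = f * ((urnSet (r+1) k).card - (urnSet (r+1) (k - s)).card) := by
          rw [Finset.sum_const, hsegcard, smul_eq_mul]
  have hcardk : (0:ℝ) < ((urnSet (r+1) k).card : ℝ) := by
    exact_mod_cast urnSet_card_pos r k
  have hmonoc := urnSet_card_mono r (Nat.sub_le k s)
  have hreal : (((urnSet (r+1) k).filter
      (fun v => ∃ i : Fin (r+1), (i:ℕ) < f ∧ v i < s)).card : ℝ) ≤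
      (f:ℝ) * (((urnSet (r+1) k).card : ℝ) - ((urnSet (r+1) (k - s)).card : ℝ)) := by
    have := hcardbound
    have hcast : ((f * ((urnSet (r+1) k).card - (urnSet (r+1) (k - s)).card) : ℕ) : ℝ) =
        (f:ℝ) * (((urnSet (r+1) k).card : ℝ) - ((urnSet (r+1) (k - s)).card : ℝ)) := by
      push_cast [Nat.cast_sub hmonoc]
      ring
    rw [← hcast]
    exact_mod_cast this
  have hratio := ratio_ge r s k hs hk
  have hratio' : ((urnSet (r+1) k).card : ℝ) - ((urnSet (r+1) k).card : ℝ) *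
      ((r:ℝ) * (s:ℝ) / (k:ℝ)) ≤ ((urnSet (r+1) (k - s)).card : ℝ) := by
    have h5 : (1 - (r:ℝ) * (s:ℝ) / (k:ℝ)) * ((urnSet (r+1) k).card : ℝ) ≤
        ((urnSet (r+1) (k - s)).card : ℝ) := (le_div_iff₀ hcardk).1 hratio
    nlinarith [h5]
  rw [div_le_iff₀ hcardk]
  have hf0 : (0:ℝ) ≤ (f:ℝ) := Nat.cast_nonneg f
  have hdiff : ((urnSet (r+1) k).card : ℝ) - ((urnSet (r+1) (k - s)).card : ℝ) ≤
      ((r:ℝ) * (s:ℝ) / (k:ℝ)) * ((urnSet (r+1) k).card : ℝ) := by linarith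
  nlinarith [hreal, mul_le_mul_of_nonneg_left hdiff hf0]

end PolyaAux

set_option maxHeartbeats 2000000 in
open PolyaAux in
theorem polya_min_asymptotics (N k f : ℕ → ℕ)
    (hN : ∀ n, 1 ≤ N n) (hk : ∀ n, 1 ≤ k n)
    (hf1 : ∀ n, 1 ≤ f n) (hfN : ∀ n, f n ≤ N n)
    (hNtop : Tendsto N atTop atTop)
    (hfreg : (∃ B : ℕ, ∀ n, f n ≤ B) ∨ Tendsto f atTop atTop) :
    -- (i) if k = ω(N·f) then X_* = Θ_p(k/(N·f))
    ((Tendsto (fun n => (k n : ℝ) / ((N n : ℝ) * (f n : ℝ))) atTop atTop →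
      (∀ δ : ℝ, 0 < δ → ∃ C : ℝ, 0 < C ∧ ∃ M : ℕ, ∀ n ≥ M,
          1 - δ ≤ urnProb (N n) (k n)
            (fun v => (minCount (f n) v : ℝ) ≤
              C * ((k n : ℝ) / ((N n : ℝ) * (f n : ℝ))))) ∧
      (∀ δ : ℝ, 0 < δ → ∃ c : ℝ, 0 < c ∧ ∃ M : ℕ, ∀ n ≥ M,
          1 - δ ≤ urnProb (N n) (k n)
            (fun v => c * ((k n : ℝ) / ((N n : ℝ) * (f n : ℝ))) ≤
              (minCount (f n) v : ℝ)))) ∧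
    -- (ii) if k = O(N·f) then X_* = O_p(1)
     ((∃ C : ℝ, 0 < C ∧ ∀ n, (k n : ℝ) ≤ C * ((N n : ℝ) * (f n : ℝ))) →
      ∀ δ : ℝ, 0 < δ → ∃ C : ℝ, 0 < C ∧ ∃ M : ℕ, ∀ n ≥ M,
          1 - δ ≤ urnProb (N n) (k n)
            (fun v => (minCount (f n) v : ℝ) ≤ C))) := by
  constructor
  · -- part (i)
    intro hω
    constructor
    · -- (i) upper
      intro δ hδ
      refine ⟨4 * (|Real.log δ| + 1), by positivity, ?_⟩
      obtain ⟨M1, hM1⟩ := Filter.eventually_atTop.1 (hNtop.eventually_ge_atTop 2)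
      obtain ⟨M2, hM2⟩ := Filter.eventually_atTop.1 (hω.eventually_ge_atTop 1)
      refine ⟨max M1 M2, fun n hn => ?_⟩
      set C := 4 * (|Real.log δ| + 1) with hC
      have hCpos : 0 < C := by rw [hC]; positivity
      have hN2 : 2 ≤ N n := hM1 n (le_trans (le_max_left _ _) hn)
      have hρ1 : (1:ℝ) ≤ (k n : ℝ) / ((N n : ℝ) * (f n : ℝ)) :=
        hM2 n (le_trans (le_max_right _ _) hn)
      set a := (N n : ℝ) with ha
      set b := (f n : ℝ) with hb
      set K := (k n : ℝ) with hK
      have ha2 : (2:ℝ) ≤ a := by rw [ha]; exact_mod_cast hN2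
      have hb1 : (1:ℝ) ≤ b := by rw [hb]; exact_mod_cast hf1 n
      have hK1 : (1:ℝ) ≤ K := by rw [hK]; exact_mod_cast hk n
      have habpos : (0:ℝ) < a * b := by nlinarith
      have habK : a * b ≤ K := by
        have := (one_le_div habpos).1 hρ1
        linarith
      have haK : a ≤ K := by nlinarith
      set T := C * (K / (a * b)) with hT
      have hT0 : 0 ≤ T := by
        rw [hT]; positivity
      have hub := master_ub (N n) (k n) (f n) (hN n) (hk n) (hf1 n) (hfN n) T hT0
      rw [← ha, ← hb, ← hK] at hub
      refine le_trans ?_ hub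
      have hden : (0:ℝ) < K + a - 1 := by linarith
      have hE : C / 4 ≤ ((a - 1) * (T * b)) / (K + a - 1) := by
        have hEeq : ((a - 1) * (T * b)) / (K + a - 1) = C * ((a - 1) * K) / (a * (K + a - 1)) := by
          rw [hT]
          field_simp
        rw [hEeq, div_le_div_iff₀ (by norm_num) (by nlinarith)]
        have hkey : a * (K + a - 1) ≤ 4 * ((a - 1) * K) := by
          nlinarith [mul_nonneg (sub_nonneg.2 haK) (by linarith : (0:ℝ) ≤ 3 * a - 4),
            mul_nonneg (by linarith : (0:ℝ) ≤ a - 2) (by linarith : (0:ℝ) ≤ a)]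
        nlinarith [mul_le_mul_of_nonneg_left hkey hCpos.le]
      have hexp : Real.exp (-((a - 1) * (T * b)) / (K + a - 1)) ≤ δ := by
        have h1 : Real.exp (-((a - 1) * (T * b)) / (K + a - 1)) ≤ Real.exp (-(C/4)) := by
          apply Real.exp_le_exp.2
          rw [neg_div]
          linarith
        refine h1.trans ?_
        have h2 : -(C/4) ≤ Real.log δ := by
          rw [hC]
          have := neg_abs_le (Real.log δ)
          linarith
        calc Real.exp (-(C/4)) ≤ Real.exp (Real.log δ) := Real.exp_le_exp.2 h2
          _ = δ := Real.exp_log hδ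
      linarith
    · -- (i) lower
      intro δ hδ
      refine ⟨min (δ/2) (1/2), by positivity, ?_⟩
      obtain ⟨M1, hM1⟩ := Filter.eventually_atTop.1 (hNtop.eventually_ge_atTop 2)
      obtain ⟨M2, hM2⟩ := Filter.eventually_atTop.1
        (hω.eventually_ge_atTop (max (2/δ) 2))
      refine ⟨max M1 M2, fun n hn => ?_⟩
      set c := min (δ/2) (1/2) with hc
      have hcpos : 0 < c := by rw [hc]; positivity
      have hc12 : c ≤ 1/2 := min_le_right _ _
      have hcδ : c ≤ δ/2 := min_le_left _ _
      have hN2 : 2 ≤ N n := hM1 n (le_trans (le_max_left _ _) hn)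
      have hρ2 : max (2/δ) 2 ≤ (k n : ℝ) / ((N n : ℝ) * (f n : ℝ)) :=
        hM2 n (le_trans (le_max_right _ _) hn)
      set a := (N n : ℝ) with ha
      set b := (f n : ℝ) with hb
      set K := (k n : ℝ) with hK
      set ρ := K / (a * b) with hρ
      have ha2 : (2:ℝ) ≤ a := by rw [ha]; exact_mod_cast hN2
      have hb1 : (1:ℝ) ≤ b := by rw [hb]; exact_mod_cast hf1 n
      have hK1 : (1:ℝ) ≤ K := by rw [hK]; exact_mod_cast hk n
      have habpos : (0:ℝ) < a * b := by nlinarith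
      have hρδ : 2/δ ≤ ρ := le_trans (le_max_left _ _) hρ2
      have hρ2' : (2:ℝ) ≤ ρ := le_trans (le_max_right _ _) hρ2
      have hab2 : (2:ℝ) ≤ a * b := by nlinarith
      have hKab : K = ρ * (a * b) := by
        rw [hρ]; field_simp
      have hK4 : (4:ℝ) ≤ K := by nlinarith
      set s : ℕ := Nat.floor (c * ρ) + 1 with hs
      have hsle : (s:ℝ) ≤ c * ρ + 1 := by
        rw [hs]; push_cast
        have := Nat.floor_le (by positivity : (0:ℝ) ≤ c * ρ)
        linarith
      have hcρs : c * ρ < (s:ℝ) := by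
        rw [hs]; push_cast
        exact Nat.lt_floor_add_one _
      have hsK : (s:ℝ) ≤ K := by
        have h1 : c * ρ ≤ ρ / 2 := by nlinarith
        have h2 : ρ ≤ K / 2 := by
          rw [hρ, div_le_div_iff₀ habpos (by norm_num)]
          nlinarith
        nlinarith
      have hsk : s ≤ k n := by
        have h := hsK
        rw [hK] at h
        exact_mod_cast h
      have hlb := master_lb (N n) (k n) (f n) s (hN n) (hk n) (hf1 n) (hfN n) hsk
      rw [← ha, ← hb, ← hK] at hlb
      have hmono2 : urnProb (N n) (k n) (fun v => s ≤ minCount (f n) v) ≤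
          urnProb (N n) (k n)
            (fun v => c * ((k n : ℝ) / ((N n : ℝ) * (f n : ℝ))) ≤ (minCount (f n) v : ℝ)) := by
        apply urnProb_mono
        intro v hv
        have h1 : (s:ℝ) ≤ (minCount (f n) v : ℝ) := by exact_mod_cast hv
        have h2 : c * ((k n : ℝ) / ((N n : ℝ) * (f n : ℝ))) = c * ρ := by
          rw [hρ, ha, hb, hK]
        rw [h2]
        linarith
      refine le_trans ?_ (le_trans hlb hmono2)
      -- 1 - δ ≤ 1 - b * ((a - 1) * s / K)
      have hbound : b * ((a - 1) * (s:ℝ) / K) ≤ δ := by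
        have hKpos : (0:ℝ) < K := by linarith
        have hs0 : (0:ℝ) ≤ (s:ℝ) := Nat.cast_nonneg s
        have key : b * ((a - 1) * (s:ℝ)) ≤ δ * K := by
          have h1 : b * ((a - 1) * (s:ℝ)) ≤ (a * b) * (s:ℝ) := by nlinarith
          have h2 : (a * b) * (s:ℝ) ≤ (a * b) * (c * ρ + 1) := by nlinarith
          have h3 : (a * b) * (c * ρ + 1) = c * K + a * b := by rw [hKab]; ring
          have h4 : a * b ≤ δ/2 * K := by
            have h5 : (2/δ) * (a * b) ≤ K := by rw [hKab]; nlinarith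
            calc a * b = δ/2 * ((2/δ) * (a * b)) := by field_simp
              _ ≤ δ/2 * K := by nlinarith
          have h6 : c * K ≤ δ/2 * K := by nlinarith
          linarith
        have heq : b * ((a - 1) * (s:ℝ) / K) = b * ((a - 1) * (s:ℝ)) / K := by ring
        rw [heq, div_le_iff₀ hKpos]
        linarith
      linarith
  · -- part (ii)
    rintro ⟨C₀, hC₀pos, hC₀⟩ δ hδ
    set C := 2 * (C₀ + 1) * (|Real.log δ| + 1) with hCdef
    have hCpos : 0 < C := by rw [hCdef]; positivity
    refine ⟨C, hCpos, ?_⟩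
    obtain ⟨M1, hM1⟩ := Filter.eventually_atTop.1 (hNtop.eventually_ge_atTop 2)
    refine ⟨M1, fun n hn => ?_⟩
    have hN2 : 2 ≤ N n := hM1 n hn
    set a := (N n : ℝ) with ha
    set b := (f n : ℝ) with hb
    set K := (k n : ℝ) with hK
    have ha2 : (2:ℝ) ≤ a := by rw [ha]; exact_mod_cast hN2
    have hb1 : (1:ℝ) ≤ b := by rw [hb]; exact_mod_cast hf1 n
    have hK1 : (1:ℝ) ≤ K := by rw [hK]; exact_mod_cast hk n
    have hKC : K ≤ C₀ * (a * b) := by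
      have := hC₀ n
      rw [← ha, ← hb, ← hK] at this
      exact this
    have hub := master_ub (N n) (k n) (f n) (hN n) (hk n) (hf1 n) (hfN n) C hCpos.le
    rw [← ha, ← hb, ← hK] at hub
    refine le_trans ?_ hub
    have habpos : (0:ℝ) < a * b := by nlinarith
    have hden : (0:ℝ) < K + a - 1 := by linarith
    have hab : a ≤ a * b := by nlinarith
    have hdenle : K + a - 1 ≤ (C₀ + 1) * (a * b) := by nlinarith
    have hnum : C * (a * b) ≤ 2 * ((a - 1) * (C * b)) := by
      nlinarith [mul_nonneg (mul_nonneg hCpos.le (by linarith : (0:ℝ) ≤ b))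
        (by linarith : (0:ℝ) ≤ a - 2)]
    have hE : |Real.log δ| + 1 ≤ ((a - 1) * (C * b)) / (K + a - 1) := by
      have h7 : C / (2 * (C₀ + 1)) ≤ ((a - 1) * (C * b)) / (K + a - 1) := by
        rw [div_le_div_iff₀ (by positivity) hden]
        nlinarith [mul_le_mul_of_nonneg_left hdenle hCpos.le,
          mul_le_mul_of_nonneg_left hnum (by positivity : (0:ℝ) ≤ C₀ + 1)]
      have h8 : C / (2 * (C₀ + 1)) = |Real.log δ| + 1 := by
        rw [hCdef]; field_simp
      rw [← h8]; exact h7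
    have hexp : Real.exp (-((a - 1) * (C * b)) / (K + a - 1)) ≤ δ := by
      have h1 : Real.exp (-((a - 1) * (C * b)) / (K + a - 1)) ≤
          Real.exp (-(|Real.log δ| + 1)) := by
        apply Real.exp_le_exp.2
        rw [neg_div]
        linarith
      refine h1.trans ?_
      have h2 : -(|Real.log δ| + 1) ≤ Real.log δ := by
        have := neg_abs_le (Real.log δ)
        linarith
      calc Real.exp (-(|Real.log δ| + 1)) ≤ Real.exp (Real.log δ) := Real.exp_le_exp.2 h2
        _ = δ := Real.exp_log hδ
    linarith
end

section
/- Fix sequences of positive integers N(n), k(n) and f(n) with 1 ≤ f(n) ≤ N(n) for all n, with N(n) → ∞ as n → ∞, and such that f is either bounded or tends to ∞. For each n let (X_1,…,X_{N(n)}) be the colour-count vector of the Pólya urn model with N(n) colours and k(n) draws, and set X^*(n) := max_{1 ≤ i ≤ f(n)} X_i. Then: (i) if k = ω(N), then X^*(n) = Θ_p((k(n)/N(n))·(1+log f(n))); (ii) if k = O(N), then X^*(n) = O_p(1+log f(n)). -/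
attribute [local instance] Classical.propDecidable

/-- `X^* = max_{1 ≤ i ≤ f} X_i`: the maximum of the counts of the first `f` colours. -/
noncomputable def maxCount {N : ℕ} (f : ℕ) (v : Fin N → ℕ) : ℕ :=
  sSup {m : ℕ | ∃ i : Fin N, (i : ℕ) < f ∧ v i = m}

lemma mem_urnSet {N j : ℕ} {v : Fin N → ℕ} : v ∈ urnSet N j ↔ ∑ i, v i = j := by
  constructor
  · intro h; exact (Finset.mem_filter.mp h).2
  · intro h
    refine Finset.mem_filter.mpr ⟨Fintype.mem_piFinset.mpr fun i => ?_, h⟩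
    rw [Finset.mem_range]
    have : v i ≤ ∑ i, v i := Finset.single_le_sum (fun _ _ => Nat.zero_le _) (Finset.mem_univ i)
    omega

lemma coord_le {N j : ℕ} {v : Fin N → ℕ} (h : v ∈ urnSet N j) (i : Fin N) : v i ≤ j := by
  have := mem_urnSet.mp h
  have h2 : v i ≤ ∑ i, v i := Finset.single_le_sum (fun _ _ => Nat.zero_le _) (Finset.mem_univ i)
  omega

/-- vectors with sum j whose first r coordinates are < m -/
noncomputable def Sset (N j r m : ℕ) : Finset (Fin N → ℕ) :=
  (urnSet N j).filter fun v => ∀ i : Fin N, (i : ℕ) < r → v i < m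

lemma Sset_zero (N j m : ℕ) : Sset N j 0 m = urnSet N j := by
  simp [Sset]

lemma urnSet_card_pos {N : ℕ} (hN : 1 ≤ N) (j : ℕ) : 0 < (urnSet N j).card := by
  refine Finset.card_pos.mpr ⟨Pi.single ⟨0, hN⟩ j, mem_urnSet.mpr ?_⟩
  simp [Pi.single_apply]

lemma sum_update_add {N : ℕ} (v : Fin N → ℕ) (i₀ : Fin N) (c : ℕ) :
    (∑ i, Function.update v i₀ c i) + v i₀ = c + ∑ i, v i := by
  rw [Finset.sum_update_of_mem (Finset.mem_univ i₀),
    Finset.sum_eq_sum_sdiff_singleton_add (Finset.mem_univ i₀) v]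
  ring

lemma shift_sum_le (N j r m : ℕ) (i₀ : Fin N) :
    ∑ v ∈ Sset N (j+1) r m, v i₀ ≤ ∑ w ∈ Sset N j r m, (w i₀ + 1) := by
  classical
  have h1 : ∑ v ∈ (Sset N (j+1) r m).filter (fun v => 1 ≤ v i₀), v i₀
      = ∑ v ∈ Sset N (j+1) r m, v i₀ := by
    rw [Finset.sum_filter]
    refine Finset.sum_congr rfl fun v _ => ?_
    by_cases h : 1 ≤ v i₀ <;> simp [h] <;> omega
  have hinj : Set.InjOn (fun v : Fin N → ℕ => Function.update v i₀ (v i₀ - 1))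
      ((Sset N (j+1) r m).filter (fun v => 1 ≤ v i₀)) := by
    intro v hv w hw h
    have hv1 : 1 ≤ v i₀ := (Finset.mem_filter.mp hv).2
    have hw1 : 1 ≤ w i₀ := (Finset.mem_filter.mp hw).2
    funext i
    by_cases hi : i = i₀
    · subst hi
      have := congrFun h i
      simp only [Function.update_self] at this
      clear * - this hv1 hw1; omega
    · have := congrFun h i
      simpa [Function.update_of_ne hi] using this
  have hsub : ((Sset N (j+1) r m).filter (fun v => 1 ≤ v i₀)).image
      (fun v => Function.update v i₀ (v i₀ - 1)) ⊆ Sset N j r m := by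
    intro w hw
    obtain ⟨v, hv, rfl⟩ := Finset.mem_image.mp hw
    obtain ⟨hvS, hv1⟩ := Finset.mem_filter.mp hv
    obtain ⟨hvU, hvlt⟩ := Finset.mem_filter.mp hvS
    have hsum := mem_urnSet.mp hvU
    refine Finset.mem_filter.mpr ⟨mem_urnSet.mpr ?_, ?_⟩
    · have := sum_update_add v i₀ (v i₀ - 1)
      clear * - this hsum hv1; omega
    · intro i hi
      by_cases hii : i = i₀
      · subst hii
        have := hvlt i hi
        simp only [Function.update_self]
        clear * - this; omega
      · simpa [Function.update_of_ne hii] using hvlt i hi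
  calc ∑ v ∈ Sset N (j+1) r m, v i₀
      = ∑ v ∈ (Sset N (j+1) r m).filter (fun v => 1 ≤ v i₀), v i₀ := h1.symm
    _ = ∑ v ∈ (Sset N (j+1) r m).filter (fun v => 1 ≤ v i₀),
          ((Function.update v i₀ (v i₀ - 1)) i₀ + 1) := by
        refine Finset.sum_congr rfl fun v hv => ?_
        have := (Finset.mem_filter.mp hv).2
        simp only [Function.update_self]
        clear * - this; omega
    _ = ∑ w ∈ ((Sset N (j+1) r m).filter (fun v => 1 ≤ v i₀)).image
          (fun v => Function.update v i₀ (v i₀ - 1)), (w i₀ + 1) :=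
        (Finset.sum_image (f := fun w => w i₀ + 1)
          (fun x hx y hy h => hinj hx hy h)).symm
    _ ≤ ∑ w ∈ Sset N j r m, (w i₀ + 1) := Finset.sum_le_sum_of_subset hsub

lemma shift_sum_ge (N j m : ℕ) (i₀ : Fin N) :
    ∑ w ∈ urnSet N j, (w i₀ + 1) ≤ ∑ v ∈ urnSet N (j+1), v i₀ := by
  classical
  have hinj : Set.InjOn (fun w : Fin N → ℕ => Function.update w i₀ (w i₀ + 1))
      (urnSet N j) := by
    intro v _ w _ h
    funext i
    by_cases hi : i = i₀
    · subst hi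
      have := congrFun h i
      simp only [Function.update_self] at this
      omega
    · have := congrFun h i
      simpa [Function.update_of_ne hi] using this
  have hsub : (urnSet N j).image (fun w => Function.update w i₀ (w i₀ + 1))
      ⊆ urnSet N (j+1) := by
    intro w hw
    obtain ⟨v, hv, rfl⟩ := Finset.mem_image.mp hw
    have hsum := mem_urnSet.mp hv
    refine mem_urnSet.mpr ?_
    have := sum_update_add v i₀ (v i₀ + 1)
    clear * - this hsum; omega
  calc ∑ w ∈ urnSet N j, (w i₀ + 1)
      = ∑ w ∈ urnSet N j, (Function.update w i₀ (w i₀ + 1)) i₀ := by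
        refine Finset.sum_congr rfl fun v hv => ?_
        simp only [Function.update_self]
    _ = ∑ u ∈ (urnSet N j).image (fun w => Function.update w i₀ (w i₀ + 1)), u i₀ :=
        (Finset.sum_image (f := fun u => u i₀) (fun x hx y hy h => hinj hx hy h)).symm
    _ ≤ ∑ v ∈ urnSet N (j+1), v i₀ := Finset.sum_le_sum_of_subset hsub

lemma step_le (N j r m : ℕ) :
    (j+1) * (Sset N (j+1) r m).card ≤ (j+N) * (Sset N j r m).card := by
  have h1 : ∑ v ∈ Sset N (j+1) r m, ∑ i, v i = (j+1) * (Sset N (j+1) r m).card := by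
    calc ∑ v ∈ Sset N (j+1) r m, ∑ i, v i
        = ∑ _v ∈ Sset N (j+1) r m, (j+1) :=
          Finset.sum_congr rfl fun v hv => mem_urnSet.mp (Finset.mem_filter.mp hv).1
      _ = (Sset N (j+1) r m).card * (j+1) := by rw [Finset.sum_const, smul_eq_mul]
      _ = (j+1) * (Sset N (j+1) r m).card := mul_comm _ _
  have h2 : ∑ w ∈ Sset N j r m, (∑ i, w i + N) = (j+N) * (Sset N j r m).card := by
    calc ∑ w ∈ Sset N j r m, (∑ i, w i + N)
        = ∑ _w ∈ Sset N j r m, (j+N) := Finset.sum_congr rfl fun w hw => by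
            rw [mem_urnSet.mp (Finset.mem_filter.mp hw).1]
      _ = (Sset N j r m).card * (j+N) := by rw [Finset.sum_const, smul_eq_mul]
      _ = (j+N) * (Sset N j r m).card := mul_comm _ _
  rw [← h1, ← h2]
  have h3 : ∀ w : Fin N → ℕ, ∑ i, w i + N = ∑ i : Fin N, (w i + 1) := by
    intro w; rw [Finset.sum_add_distrib]; simp
  calc ∑ v ∈ Sset N (j+1) r m, ∑ i, v i
      = ∑ i : Fin N, ∑ v ∈ Sset N (j+1) r m, v i := Finset.sum_comm
    _ ≤ ∑ i : Fin N, ∑ w ∈ Sset N j r m, (w i + 1) :=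
        Finset.sum_le_sum fun i _ => shift_sum_le N j r m i
    _ = ∑ w ∈ Sset N j r m, ∑ i : Fin N, (w i + 1) := Finset.sum_comm
    _ = ∑ w ∈ Sset N j r m, (∑ i, w i + N) :=
        Finset.sum_congr rfl fun w _ => (h3 w).symm

lemma step_ge (N j : ℕ) :
    (j+N) * (urnSet N j).card ≤ (j+1) * (urnSet N (j+1)).card := by
  have h1 : ∑ v ∈ urnSet N (j+1), ∑ i, v i = (j+1) * (urnSet N (j+1)).card := by
    calc ∑ v ∈ urnSet N (j+1), ∑ i, v i
        = ∑ _v ∈ urnSet N (j+1), (j+1) := Finset.sum_congr rfl fun v hv => mem_urnSet.mp hv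
      _ = (urnSet N (j+1)).card * (j+1) := by rw [Finset.sum_const, smul_eq_mul]
      _ = (j+1) * (urnSet N (j+1)).card := mul_comm _ _
  have h2 : ∑ w ∈ urnSet N j, (∑ i, w i + N) = (j+N) * (urnSet N j).card := by
    calc ∑ w ∈ urnSet N j, (∑ i, w i + N)
        = ∑ _w ∈ urnSet N j, (j+N) := Finset.sum_congr rfl fun w hw => by
            rw [mem_urnSet.mp hw]
      _ = (urnSet N j).card * (j+N) := by rw [Finset.sum_const, smul_eq_mul]
      _ = (j+N) * (urnSet N j).card := mul_comm _ _
  rw [← h1, ← h2]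
  have h3 : ∀ w : Fin N → ℕ, ∑ i, w i + N = ∑ i : Fin N, (w i + 1) := by
    intro w; rw [Finset.sum_add_distrib]; simp
  calc ∑ w ∈ urnSet N j, (∑ i, w i + N)
      = ∑ w ∈ urnSet N j, ∑ i : Fin N, (w i + 1) := Finset.sum_congr rfl fun w _ => h3 w
    _ = ∑ i : Fin N, ∑ w ∈ urnSet N j, (w i + 1) := Finset.sum_comm
    _ ≤ ∑ i : Fin N, ∑ v ∈ urnSet N (j+1), v i :=
        Finset.sum_le_sum fun i _ => shift_sum_ge N j 0 i
    _ = ∑ v ∈ urnSet N (j+1), ∑ i, v i := Finset.sum_comm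

lemma Wstep (N j : ℕ) :
    (j+1) * (urnSet N (j+1)).card = (j+N) * (urnSet N j).card := by
  refine le_antisymm ?_ (step_ge N j)
  have := step_le N j 0 0
  simpa [Sset_zero] using this

lemma W_le_succ {N : ℕ} (hN : 1 ≤ N) (j : ℕ) :
    (urnSet N j).card ≤ (urnSet N (j+1)).card := by
  have h := step_ge N j
  have h2 : (j+1) * (urnSet N (j+1)).card ≤ (j+N) * (urnSet N (j+1)).card :=
    Nat.mul_le_mul_right _ (by omega)
  have h3 : (j+N) * (urnSet N j).card ≤ (j+N) * (urnSet N (j+1)).card := le_trans h h2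
  exact Nat.le_of_mul_le_mul_left h3 (by omega)

lemma W_mono {N : ℕ} (hN : 1 ≤ N) {a b : ℕ} (hab : a ≤ b) :
    (urnSet N a).card ≤ (urnSet N b).card := by
  induction b with
  | zero => simpa [Nat.le_zero.mp hab]
  | succ b ih =>
    rcases Nat.lt_or_ge a (b+1) with h | h
    · exact le_trans (ih (by omega)) (W_le_succ hN b)
    · have : a = b + 1 := by omega
      simp [this]

lemma mono_ratio (N r m : ℕ) (d j : ℕ) :
    (Sset N (j+d) r m).card * (urnSet N j).card ≤
      (Sset N j r m).card * (urnSet N (j+d)).card := by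
  induction d with
  | zero => simp
  | succ d ih =>
    have s1 := step_le N (j+d) r m
    have s2 := Wstep N (j+d)
    have key : (j+d+1) * ((Sset N (j+d+1) r m).card * (urnSet N j).card) ≤
        (j+d+1) * ((Sset N j r m).card * (urnSet N (j+d+1)).card) := by
      calc (j+d+1) * ((Sset N (j+d+1) r m).card * (urnSet N j).card)
          = ((j+d+1) * (Sset N (j+d+1) r m).card) * (urnSet N j).card := by ring
        _ ≤ ((j+d+N) * (Sset N (j+d) r m).card) * (urnSet N j).card :=
            Nat.mul_le_mul_right _ s1
        _ = (j+d+N) * ((Sset N (j+d) r m).card * (urnSet N j).card) := by ring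
        _ ≤ (j+d+N) * ((Sset N j r m).card * (urnSet N (j+d)).card) :=
            Nat.mul_le_mul_left _ ih
        _ = (Sset N j r m).card * ((j+d+N) * (urnSet N (j+d)).card) := by ring
        _ = (Sset N j r m).card * ((j+d+1) * (urnSet N (j+d+1)).card) := by rw [← s2]
        _ = (j+d+1) * ((Sset N j r m).card * (urnSet N (j+d+1)).card) := by ring
    have hshift : j + (d+1) = (j+d) + 1 := by omega
    rw [hshift]
    exact Nat.le_of_mul_le_mul_left key (by omega)

lemma p_upper_nat {N k : ℕ} (hN : 1 ≤ N) : ∀ m ≤ k,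
    (urnSet N (k-m)).card * (k+N-1)^m ≤ (urnSet N k).card * k^m := by
  intro m
  induction m with
  | zero => simp
  | succ m ih =>
    intro hmk
    have ihm := ih (by omega)
    have ha : k - m = (k - (m+1)) + 1 := by omega
    set a := k - (m+1) with haa
    have hws : (a+1) * (urnSet N (a+1)).card = (a+N) * (urnSet N a).card := Wstep N a
    have hcross : (a+1)*(k+N-1) ≤ k*(a+N) := by
      have h1 : a + 1 ≤ k := by omega
      have h2 : (a+1)*(k+N-1) = (a+1)*k + (a+1)*(N-1) := by
        have : k + N - 1 = k + (N-1) := by omega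
        rw [this]; ring
      have h3 : k*(a+N) = (a+1)*k + k*(N-1) := by
        have : a + N = (a+1) + (N-1) := by omega
        rw [this]; ring
      have h4 : (a+1)*(N-1) ≤ k*(N-1) := Nat.mul_le_mul_right _ h1
      omega
    have key : (a+N) * ((urnSet N a).card * (k+N-1)^(m+1)) ≤
        (a+N) * ((urnSet N k).card * k^(m+1)) := by
      calc (a+N) * ((urnSet N a).card * (k+N-1)^(m+1))
          = ((a+N) * (urnSet N a).card) * (k+N-1)^(m+1) := by ring
        _ = ((a+1) * (urnSet N (a+1)).card) * (k+N-1)^(m+1) := by rw [hws]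
        _ = ((a+1)*(k+N-1)) * ((urnSet N (a+1)).card * (k+N-1)^m) := by ring
        _ ≤ ((a+1)*(k+N-1)) * ((urnSet N k).card * k^m) := by
            apply Nat.mul_le_mul_left
            rw [ha] at ihm; exact ihm
        _ ≤ (k*(a+N)) * ((urnSet N k).card * k^m) := Nat.mul_le_mul_right _ hcross
        _ = (a+N) * ((urnSet N k).card * k^(m+1)) := by ring
    exact Nat.le_of_mul_le_mul_left key (by omega)

lemma p_lower_nat {N : ℕ} (hN : 1 ≤ N) (a : ℕ) : ∀ b,
    (urnSet N (a+b)).card * (a+1)^b ≤ (urnSet N a).card * (a+N)^b := by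
  intro b
  induction b with
  | zero => simp
  | succ b ih =>
    have hws : (a+b+1) * (urnSet N (a+b+1)).card = (a+b+N) * (urnSet N (a+b)).card :=
      Wstep N (a+b)
    have hcross : (a+b+N)*(a+1) ≤ (a+b+1)*(a+N) := by nlinarith [Nat.one_le_iff_ne_zero.mp hN]
    have key : (a+b+1) * ((urnSet N (a+(b+1))).card * (a+1)^(b+1)) ≤
        (a+b+1) * ((urnSet N a).card * (a+N)^(b+1)) := by
      have hsh : a + (b+1) = (a+b)+1 := by omega
      calc (a+b+1) * ((urnSet N (a+(b+1))).card * (a+1)^(b+1))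
          = ((a+b+1) * (urnSet N ((a+b)+1)).card) * (a+1)^(b+1) := by rw [hsh]; ring
        _ = ((a+b+N) * (urnSet N (a+b)).card) * (a+1)^(b+1) := by rw [hws]
        _ = ((a+b+N)*(a+1)) * ((urnSet N (a+b)).card * (a+1)^b) := by ring
        _ ≤ ((a+b+N)*(a+1)) * ((urnSet N a).card * (a+N)^b) := Nat.mul_le_mul_left _ ih
        _ ≤ ((a+b+1)*(a+N)) * ((urnSet N a).card * (a+N)^b) := Nat.mul_le_mul_right _ hcross
        _ = (a+b+1) * ((urnSet N a).card * (a+N)^(b+1)) := by ring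
    exact Nat.le_of_mul_le_mul_left key (by omega)

lemma shift_card (N k r m : ℕ) (hm : m ≤ k) (i₀ : Fin N) (hr : r ≤ (i₀:ℕ)) :
    ((Sset N k r m).filter (fun v => m ≤ v i₀)).card = (Sset N (k-m) r m).card := by
  classical
  apply Finset.card_nbij' (fun v => Function.update v i₀ (v i₀ - m))
    (fun w => Function.update w i₀ (w i₀ + m))
  · intro v hv
    obtain ⟨hvS, hvm⟩ := Finset.mem_filter.mp hv
    obtain ⟨hvU, hvlt⟩ := Finset.mem_filter.mp hvS
    have hsum := mem_urnSet.mp hvU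
    refine Finset.mem_filter.mpr ⟨mem_urnSet.mpr ?_, ?_⟩
    · have := sum_update_add v i₀ (v i₀ - m)
      beta_reduce
      clear * - this hsum hvm hm; omega
    · intro i hi
      have hne : i ≠ i₀ := by
        intro h; rw [h] at hi; omega
      beta_reduce
      rw [Function.update_of_ne hne]
      exact hvlt i hi
  · intro w hw
    obtain ⟨hwU, hwlt⟩ := Finset.mem_filter.mp hw
    have hsum := mem_urnSet.mp hwU
    refine Finset.mem_filter.mpr ⟨Finset.mem_filter.mpr ⟨mem_urnSet.mpr ?_, ?_⟩, ?_⟩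
    · have := sum_update_add w i₀ (w i₀ + m)
      beta_reduce
      clear * - this hsum hm; omega
    · intro i hi
      have hne : i ≠ i₀ := by
        intro h; rw [h] at hi; omega
      beta_reduce
      rw [Function.update_of_ne hne]
      exact hwlt i hi
    · simp only [Function.update_self]; omega
  · intro v hv
    obtain ⟨_, hvm⟩ := Finset.mem_filter.mp hv
    funext i
    by_cases hi : i = i₀
    · subst hi; simp only [Function.update_self]
      clear * - hvm; omega
    · simp only [Function.update_of_ne hi]
  · intro w _
    funext i
    by_cases hi : i = i₀
    · subst hi; simp only [Function.update_self]; omega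
    · simp only [Function.update_of_ne hi]

lemma Sset_succ (N k r m : ℕ) (hrN : r < N) :
    Sset N k (r+1) m = (Sset N k r m).filter (fun v => v ⟨r, hrN⟩ < m) := by
  ext v
  simp only [Sset, Finset.mem_filter]
  constructor
  · rintro ⟨hu, hlt⟩
    exact ⟨⟨hu, fun i hi => hlt i (by omega)⟩, hlt _ (by simp)⟩
  · rintro ⟨⟨hu, hlt⟩, hr⟩
    refine ⟨hu, fun i hi => ?_⟩
    rcases Nat.lt_or_ge (i : ℕ) r with h | h
    · exact hlt i h
    · have hir : (i : ℕ) = r := by omega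
      have : i = ⟨r, hrN⟩ := Fin.ext (by simpa using hir)
      rw [this]; exact hr

lemma T_rec (N k r m : ℕ) (hm : m ≤ k) (hrN : r < N) :
    (Sset N k (r+1) m).card + (Sset N (k-m) r m).card = (Sset N k r m).card := by
  classical
  rw [Sset_succ N k r m hrN, ← shift_card N k r m hm ⟨r, hrN⟩ (le_refl r)]
  have : (Sset N k r m).filter (fun v => m ≤ v ⟨r, hrN⟩) =
      (Sset N k r m).filter (fun v => ¬ (v ⟨r, hrN⟩ < m)) := by
    apply Finset.filter_congr; intro v _; simp [not_lt]
  rw [this]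
  exact Finset.card_filter_add_card_filter_not _

lemma T_bound {N k m : ℕ} (hN : 1 ≤ N) (hm : m ≤ k) :
    ∀ f ≤ N, ((Sset N k f m).card : ℝ) ≤ (urnSet N k).card *
      (1 - ((urnSet N (k-m)).card : ℝ) / ((urnSet N k).card : ℝ))^f := by
  have hA : (0:ℝ) < ((urnSet N k).card : ℝ) := by
    exact_mod_cast urnSet_card_pos hN k
  have hWle : ((urnSet N (k-m)).card : ℝ) ≤ ((urnSet N k).card : ℝ) := by
    exact_mod_cast W_mono hN (Nat.sub_le k m)
  have hp0 : (0:ℝ) ≤ ((urnSet N (k-m)).card : ℝ) / ((urnSet N k).card : ℝ) :=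
    div_nonneg (by positivity) (le_of_lt hA)
  have hp1 : ((urnSet N (k-m)).card : ℝ) / ((urnSet N k).card : ℝ) ≤ 1 :=
    (div_le_one hA).mpr hWle
  intro f
  induction f with
  | zero =>
    intro _
    simp [Sset_zero]
  | succ f ih =>
    intro hfN
    have hrN : f < N := by omega
    have hrec := T_rec N k f m hm hrN
    have hmono := mono_ratio N f m m (k - m)
    rw [Nat.sub_add_cancel hm] at hmono
    have hrecR : ((Sset N k (f+1) m).card : ℝ) =
        (Sset N k f m).card - (Sset N (k-m) f m).card := by
      have := hrec
      push_cast [← this]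
      ring
    have hmonoR : ((Sset N k f m).card : ℝ) * ((urnSet N (k-m)).card : ℝ) ≤
        ((Sset N (k-m) f m).card : ℝ) * ((urnSet N k).card : ℝ) := by
      exact_mod_cast hmono
    have hUge : ((Sset N k f m).card : ℝ) *
        (((urnSet N (k-m)).card : ℝ) / ((urnSet N k).card : ℝ)) ≤
        ((Sset N (k-m) f m).card : ℝ) := by
      rw [mul_div_assoc', div_le_iff₀ hA]
      exact hmonoR
    have hih := ih (by omega)
    set p : ℝ := ((urnSet N (k-m)).card : ℝ) / ((urnSet N k).card : ℝ) with hpdef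
    calc ((Sset N k (f+1) m).card : ℝ)
        = (Sset N k f m).card - (Sset N (k-m) f m).card := hrecR
      _ ≤ (Sset N k f m).card - (Sset N k f m).card * p := by linarith
      _ = ((Sset N k f m).card : ℝ) * (1 - p) := by ring
      _ ≤ ((urnSet N k).card * (1 - p)^f) * (1 - p) := by
          apply mul_le_mul_of_nonneg_right hih
          linarith
      _ = (urnSet N k).card * (1 - p)^(f+1) := by ring

lemma union_card (N k f m : ℕ) (hm : m ≤ k) :
    ((urnSet N k).filter (fun v => ∃ i : Fin N, (i:ℕ) < f ∧ m ≤ v i)).card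
      ≤ f * (urnSet N (k-m)).card := by
  classical
  have hsub : (urnSet N k).filter (fun v => ∃ i : Fin N, (i:ℕ) < f ∧ m ≤ v i) ⊆
      (Finset.univ.filter (fun i : Fin N => (i:ℕ) < f)).biUnion
        (fun i => (urnSet N k).filter (fun v => m ≤ v i)) := by
    intro v hv
    obtain ⟨hvU, i, hif, hvm⟩ := Finset.mem_filter.mp hv
    exact Finset.mem_biUnion.mpr ⟨i, Finset.mem_filter.mpr ⟨Finset.mem_univ i, hif⟩,
      Finset.mem_filter.mpr ⟨hvU, hvm⟩⟩
  calc ((urnSet N k).filter (fun v => ∃ i : Fin N, (i:ℕ) < f ∧ m ≤ v i)).card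
      ≤ ((Finset.univ.filter (fun i : Fin N => (i:ℕ) < f)).biUnion
          (fun i => (urnSet N k).filter (fun v => m ≤ v i))).card :=
        Finset.card_le_card hsub
    _ ≤ ∑ i ∈ Finset.univ.filter (fun i : Fin N => (i:ℕ) < f),
          ((urnSet N k).filter (fun v => m ≤ v i)).card := Finset.card_biUnion_le
    _ = ∑ i ∈ Finset.univ.filter (fun i : Fin N => (i:ℕ) < f),
          (urnSet N (k-m)).card := by
        refine Finset.sum_congr rfl fun i _ => ?_
        have := shift_card N k 0 m hm i (Nat.zero_le _)
        rwa [Sset_zero, Sset_zero] at this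
    _ = (Finset.univ.filter (fun i : Fin N => (i:ℕ) < f)).card * (urnSet N (k-m)).card := by
        rw [Finset.sum_const, smul_eq_mul]
    _ ≤ f * (urnSet N (k-m)).card := by
        apply Nat.mul_le_mul_right
        have : (Finset.univ.filter (fun i : Fin N => (i:ℕ) < f)).card ≤ (Finset.range f).card := by
          refine Finset.card_le_card_of_injOn (fun i => (i:ℕ))
            (fun i hi => Finset.mem_range.mpr (Finset.mem_filter.mp hi).2)
            (fun a _ b _ h => Fin.val_injective h)
        simpa using this

lemma prob_ge {N k : ℕ} (hN : 1 ≤ N) (p : (Fin N → ℕ) → Prop) {δ : ℝ}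
    (h : (((urnSet N k).filter fun v => ¬ p v).card : ℝ) ≤ δ * (urnSet N k).card) :
    1 - δ ≤ urnProb N k p := by
  classical
  have hA : (0:ℝ) < ((urnSet N k).card : ℝ) := by exact_mod_cast urnSet_card_pos hN k
  have hpart : ((urnSet N k).filter p).card + ((urnSet N k).filter fun v => ¬ p v).card
      = (urnSet N k).card := Finset.card_filter_add_card_filter_not _
  have hpartR : (((urnSet N k).filter p).card : ℝ)
      = (urnSet N k).card - (((urnSet N k).filter fun v => ¬ p v).card : ℝ) := by
    push_cast [← hpart]; ring
  rw [urnProb, hpartR, sub_div, div_self (ne_of_gt hA)]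
  have : (↑(Finset.filter (fun v => ¬p v) (urnSet N k)).card : ℝ) / ↑(urnSet N k).card ≤ δ :=
    (div_le_iff₀ hA).mpr (by linarith)
  linarith

lemma maxCount_set_finite {N f : ℕ} (v : Fin N → ℕ) :
    {m : ℕ | ∃ i : Fin N, (i : ℕ) < f ∧ v i = m}.Finite := by
  apply Set.Finite.subset (Set.finite_range v)
  rintro m ⟨i, _, rfl⟩
  exact Set.mem_range_self i

lemma le_maxCount {N f : ℕ} (v : Fin N → ℕ) (i : Fin N) (hi : (i : ℕ) < f) :
    v i ≤ maxCount f v :=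
  le_csSup (maxCount_set_finite v).bddAbove ⟨i, hi, rfl⟩

lemma maxCount_mem {N f : ℕ} (hN : 1 ≤ N) (hf : 1 ≤ f) (v : Fin N → ℕ) :
    ∃ i : Fin N, (i : ℕ) < f ∧ v i = maxCount f v := by
  have hne : {m : ℕ | ∃ i : Fin N, (i : ℕ) < f ∧ v i = m}.Nonempty :=
    ⟨v ⟨0, hN⟩, ⟨0, hN⟩, by simp; omega, rfl⟩
  exact Nat.sSup_mem hne (maxCount_set_finite v).bddAbove

lemma cast_kN {N k : ℕ} (hN : 1 ≤ N) : ((k + N - 1 : ℕ) : ℝ) = (k : ℝ) + N - 1 := by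
  have h : k + N - 1 = k + (N - 1) := by omega
  rw [h]
  push_cast [Nat.cast_sub hN]
  ring

lemma core_upper (N k f : ℕ) (hN : 1 ≤ N) (hk : 1 ≤ k) (hf1 : 1 ≤ f) (δ y : ℝ)
    (hδ0 : 0 ≤ δ) (hy : 0 ≤ y)
    (hbound : (f : ℝ) * ((k : ℝ) / ((k : ℝ) + (N : ℝ) - 1)) ^ (Nat.floor y + 1) ≤ δ) :
    1 - δ ≤ urnProb N k (fun v => (maxCount f v : ℝ) ≤ y) := by
  classical
  set m := Nat.floor y + 1 with hmdef
  apply prob_ge hN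
  have hA : (0:ℝ) < ((urnSet N k).card : ℝ) := by exact_mod_cast urnSet_card_pos hN k
  have hsub : (urnSet N k).filter (fun v => ¬ ((maxCount f v : ℝ) ≤ y)) ⊆
      (urnSet N k).filter (fun v => ∃ i : Fin N, (i:ℕ) < f ∧ m ≤ v i) := by
    intro v hv
    obtain ⟨hvU, hvlt⟩ := Finset.mem_filter.mp hv
    push_neg at hvlt
    obtain ⟨i, hif, hieq⟩ := maxCount_mem hN hf1 v
    refine Finset.mem_filter.mpr ⟨hvU, i, hif, ?_⟩
    have : Nat.floor y < maxCount f v := (Nat.floor_lt hy).mpr hvlt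
    omega
  have hcard : (((urnSet N k).filter (fun v => ¬ ((maxCount f v : ℝ) ≤ y))).card : ℝ)
      ≤ ((((urnSet N k).filter (fun v => ∃ i : Fin N, (i:ℕ) < f ∧ m ≤ v i)).card : ℝ)) := by
    exact_mod_cast Finset.card_le_card hsub
  by_cases hmk : m ≤ k
  · have hu : (((urnSet N k).filter (fun v => ∃ i : Fin N, (i:ℕ) < f ∧ m ≤ v i)).card : ℝ)
        ≤ (f : ℝ) * ((urnSet N (k-m)).card : ℝ) := by
      exact_mod_cast union_card N k f m hmk
    have hq : ((urnSet N (k-m)).card : ℝ) ≤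
        ((k : ℝ) / ((k : ℝ) + (N : ℝ) - 1)) ^ m * ((urnSet N k).card : ℝ) := by
      have hnat := p_upper_nat (k := k) hN m hmk
      have hR : ((urnSet N (k-m)).card : ℝ) * ((k : ℝ) + (N : ℝ) - 1) ^ m ≤
          ((urnSet N k).card : ℝ) * (k : ℝ) ^ m := by
        have := (Nat.cast_le (α := ℝ)).mpr hnat
        push_cast at this
        rwa [cast_kN hN] at this
      have hpos : (0:ℝ) < ((k : ℝ) + (N : ℝ) - 1) ^ m := by
        apply pow_pos
        have : (1:ℝ) ≤ (k:ℝ) := by exact_mod_cast hk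
        have : (1:ℝ) ≤ (N:ℝ) := by exact_mod_cast hN
        linarith [(show (1:ℝ) ≤ (k:ℝ) by exact_mod_cast hk)]
      rw [div_pow, div_mul_eq_mul_div, le_div_iff₀ hpos]
      calc ((urnSet N (k-m)).card : ℝ) * ((k : ℝ) + (N : ℝ) - 1) ^ m
          ≤ ((urnSet N k).card : ℝ) * (k : ℝ) ^ m := hR
        _ = (k : ℝ) ^ m * ((urnSet N k).card : ℝ) := by ring
    calc (((urnSet N k).filter (fun v => ¬ ((maxCount f v : ℝ) ≤ y))).card : ℝ)
        ≤ (f : ℝ) * ((urnSet N (k-m)).card : ℝ) := le_trans hcard hu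
      _ ≤ (f : ℝ) * (((k : ℝ) / ((k : ℝ) + (N : ℝ) - 1)) ^ m * ((urnSet N k).card : ℝ)) := by
          apply mul_le_mul_of_nonneg_left hq (by positivity)
      _ = ((f : ℝ) * ((k : ℝ) / ((k : ℝ) + (N : ℝ) - 1)) ^ m) * ((urnSet N k).card : ℝ) := by
          ring
      _ ≤ δ * ((urnSet N k).card : ℝ) := by
          apply mul_le_mul_of_nonneg_right hbound (le_of_lt hA)
  · have hempty : ((urnSet N k).filter (fun v => ∃ i : Fin N, (i:ℕ) < f ∧ m ≤ v i)) = ∅ := by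
      apply Finset.filter_false_of_mem
      intro v hv
      rintro ⟨i, _, hmi⟩
      have := coord_le hv i
      omega
    rw [hempty] at hcard
    simp only [Finset.card_empty, Nat.cast_zero] at hcard
    calc (((urnSet N k).filter (fun v => ¬ ((maxCount f v : ℝ) ≤ y))).card : ℝ)
        ≤ 0 := hcard
      _ ≤ δ * ((urnSet N k).card : ℝ) := by positivity

lemma core_lower (N k f m : ℕ) (hN : 1 ≤ N) (hf1 : 1 ≤ f) (hfN : f ≤ N) (hmk : m ≤ k)
    (x δ : ℝ) (hxm : x ≤ m)
    (hδ : (1 - ((urnSet N (k-m)).card : ℝ) / ((urnSet N k).card : ℝ))^f ≤ δ) :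
    1 - δ ≤ urnProb N k (fun v => x ≤ (maxCount f v : ℝ)) := by
  classical
  apply prob_ge hN
  have hsub : (urnSet N k).filter (fun v => ¬ (x ≤ (maxCount f v : ℝ))) ⊆ Sset N k f m := by
    intro v hv
    obtain ⟨hvU, hvlt⟩ := Finset.mem_filter.mp hv
    push_neg at hvlt
    refine Finset.mem_filter.mpr ⟨hvU, fun i hi => ?_⟩
    have h1 : ((maxCount f v : ℝ)) < (m : ℝ) := lt_of_lt_of_le hvlt hxm
    have h2 : maxCount f v < m := by exact_mod_cast h1
    have := le_maxCount v i hi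
    omega
  calc (((urnSet N k).filter (fun v => ¬ (x ≤ (maxCount f v : ℝ)))).card : ℝ)
      ≤ ((Sset N k f m).card : ℝ) := by exact_mod_cast Finset.card_le_card hsub
    _ ≤ ((urnSet N k).card : ℝ) *
        (1 - ((urnSet N (k-m)).card : ℝ) / ((urnSet N k).card : ℝ))^f :=
        T_bound hN hmk f hfN
    _ ≤ ((urnSet N k).card : ℝ) * δ := by
        apply mul_le_mul_of_nonneg_left hδ (by positivity)
    _ = δ * ((urnSet N k).card : ℝ) := mul_comm _ _

lemma p_lower_real (N k m : ℕ) (hN : 1 ≤ N) (hmk : m ≤ k) :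
    (((k:ℝ) - m + 1)/((k:ℝ) - m + N))^m ≤
      ((urnSet N (k-m)).card : ℝ) / ((urnSet N k).card : ℝ) := by
  have hA : (0:ℝ) < ((urnSet N k).card : ℝ) := by exact_mod_cast urnSet_card_pos hN k
  have hnat := p_lower_nat hN (k-m) m
  rw [Nat.sub_add_cancel hmk] at hnat
  have hR : ((urnSet N k).card : ℝ) * ((k:ℝ) - m + 1)^m ≤
      ((urnSet N (k-m)).card : ℝ) * ((k:ℝ) - m + N)^m := by
    have := (Nat.cast_le (α := ℝ)).mpr hnat
    push_cast at this
    have hc : ((k - m : ℕ) : ℝ) = (k:ℝ) - m := by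
      push_cast [Nat.cast_sub hmk]; ring
    rwa [hc] at this
  have hNpos : (0:ℝ) < (k:ℝ) - m + N := by
    have h1 : (m:ℝ) ≤ (k:ℝ) := by exact_mod_cast hmk
    have h2 : (1:ℝ) ≤ (N:ℝ) := by exact_mod_cast hN
    linarith
  have hpow : (0:ℝ) < ((k:ℝ) - m + N)^m := pow_pos hNpos m
  rw [div_pow, div_le_div_iff₀ hpow hA]
  calc (((k:ℝ) - m + 1))^m * ((urnSet N k).card : ℝ)
      = ((urnSet N k).card : ℝ) * ((k:ℝ) - m + 1)^m := by ring
    _ ≤ ((urnSet N (k-m)).card : ℝ) * ((k:ℝ) - m + N)^m := hR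

lemma p_le_one (N k m : ℕ) (hN : 1 ≤ N) :
    ((urnSet N (k-m)).card : ℝ) / ((urnSet N k).card : ℝ) ≤ 1 := by
  have hA : (0:ℝ) < ((urnSet N k).card : ℝ) := by exact_mod_cast urnSet_card_pos hN k
  rw [div_le_one hA]
  exact_mod_cast W_mono hN (Nat.sub_le k m)

lemma p_bern (N k m : ℕ) (hN : 1 ≤ N) (hmk : m ≤ k) :
    1 - (m:ℝ)*(((N:ℝ)-1)/((k:ℝ)-m+N)) ≤
      ((urnSet N (k-m)).card : ℝ) / ((urnSet N k).card : ℝ) := by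
  have h1 : (m:ℝ) ≤ (k:ℝ) := by exact_mod_cast hmk
  have h2 : (1:ℝ) ≤ (N:ℝ) := by exact_mod_cast hN
  have hNpos : (0:ℝ) < (k:ℝ) - m + N := by linarith
  have hz1 : ((N:ℝ)-1)/((k:ℝ)-m+N) ≤ 1 := by
    rw [div_le_one hNpos]; linarith
  have hbern := one_add_mul_le_pow (a := -(((N:ℝ)-1)/((k:ℝ)-m+N))) (by linarith) m
  have hbase : 1 + -(((N:ℝ)-1)/((k:ℝ)-m+N)) = ((k:ℝ) - m + 1)/((k:ℝ)-m+N) := by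
    field_simp
    ring
  rw [hbase] at hbern
  calc 1 - (m:ℝ)*(((N:ℝ)-1)/((k:ℝ)-m+N))
      = 1 + (m:ℝ) * -(((N:ℝ)-1)/((k:ℝ)-m+N)) := by ring
    _ ≤ (((k:ℝ) - m + 1)/((k:ℝ)-m+N))^m := hbern
    _ ≤ _ := p_lower_real N k m hN hmk

lemma p_exp (N k m : ℕ) (hN : 1 ≤ N) (hmk : m ≤ k) :
    Real.exp (-((m:ℝ)*(((N:ℝ)-1)/((k:ℝ)-m+1)))) ≤
      ((urnSet N (k-m)).card : ℝ) / ((urnSet N k).card : ℝ) := by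
  have h1 : (m:ℝ) ≤ (k:ℝ) := by exact_mod_cast hmk
  have h2 : (1:ℝ) ≤ (N:ℝ) := by exact_mod_cast hN
  have hd : (0:ℝ) < (k:ℝ) - m + 1 := by linarith
  have hn : (0:ℝ) < (k:ℝ) - m + N := by linarith
  have hbase : (0:ℝ) < ((k:ℝ) - m + 1)/((k:ℝ)-m+N) := div_pos hd hn
  have hlog : Real.log (((k:ℝ)-m+N)/((k:ℝ)-m+1)) ≤ ((N:ℝ)-1)/((k:ℝ)-m+1) := by
    have := Real.log_le_sub_one_of_pos (div_pos hn hd)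
    have he : ((k:ℝ)-m+N)/((k:ℝ)-m+1) - 1 = ((N:ℝ)-1)/((k:ℝ)-m+1) := by
      field_simp
      ring
    linarith [he ▸ this]
  have hloginv : -Real.log (((k:ℝ)-m+1)/((k:ℝ)-m+N)) ≤ ((N:ℝ)-1)/((k:ℝ)-m+1) := by
    rw [← Real.log_inv]
    rw [inv_div]
    exact hlog
  have hpow : Real.exp (-((m:ℝ)*(((N:ℝ)-1)/((k:ℝ)-m+1)))) ≤
      (((k:ℝ) - m + 1)/((k:ℝ)-m+N))^m := by
    rw [← Real.exp_log hbase, ← Real.exp_nat_mul, Real.exp_le_exp]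
    have hlog' : -(((N:ℝ)-1)/((k:ℝ)-m+1)) ≤ Real.log (((k:ℝ)-m+1)/((k:ℝ)-m+N)) := by
      linarith
    calc -((m:ℝ)*(((N:ℝ)-1)/((k:ℝ)-m+1)))
        = (m:ℝ) * (-(((N:ℝ)-1)/((k:ℝ)-m+1))) := by ring
      _ ≤ (m:ℝ) * Real.log (((k:ℝ)-m+1)/((k:ℝ)-m+N)) := by
          apply mul_le_mul_of_nonneg_left hlog' (by positivity)
  exact le_trans hpow (p_lower_real N k m hN hmk)

lemma exp_helper {δ : ℝ} (hδ : 0 < δ) : Real.exp (-(1 + max 0 (Real.log δ⁻¹))) ≤ δ := by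
  rcases le_or_gt δ 1 with h | h
  · have hpos : (0:ℝ) < δ⁻¹ := by positivity
    have hlog : 0 ≤ Real.log δ⁻¹ := by
      apply Real.log_nonneg
      exact one_le_inv_iff₀.mpr ⟨hδ, h⟩
    rw [max_eq_right hlog]
    have : Real.exp (-(1 + Real.log δ⁻¹)) = Real.exp (-1) * δ := by
      rw [neg_add, Real.exp_add, Real.exp_neg (Real.log δ⁻¹), Real.exp_log hpos]
      rw [inv_inv]
    rw [this]
    nlinarith [Real.exp_lt_one_iff.mpr (show (-1:ℝ) < 0 by norm_num), Real.exp_pos (-1:ℝ)]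
  · have h0 : Real.exp (-(1 + max 0 (Real.log δ⁻¹))) ≤ Real.exp 0 := by
      apply Real.exp_le_exp.mpr
      have : (0:ℝ) ≤ max 0 (Real.log δ⁻¹) := le_max_left _ _
      linarith
    rw [Real.exp_zero] at h0
    linarith

lemma final_exp {F δ : ℝ} (hF : 0 ≤ F) (hδ : 0 < δ) :
    Real.exp (F - (1 + max 0 (Real.log δ⁻¹)) * (1 + F)) ≤ δ := by
  have hmax : (0:ℝ) ≤ max 0 (Real.log δ⁻¹) := le_max_left _ _
  have h1 : F - (1 + max 0 (Real.log δ⁻¹)) * (1 + F) ≤ -(1 + max 0 (Real.log δ⁻¹)) := by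
    nlinarith
  exact le_trans (Real.exp_le_exp.mpr h1) (exp_helper hδ)

lemma log_plus_le {f N : ℕ} (hf1 : 1 ≤ f) (hfN : f ≤ N) : 1 + Real.log f ≤ (N:ℝ) := by
  have hfpos : (0:ℝ) < (f:ℝ) := by exact_mod_cast hf1
  have := Real.log_le_sub_one_of_pos hfpos
  have hfN' : (f:ℝ) ≤ (N:ℝ) := by exact_mod_cast hfN
  linarith

lemma bound_i_upper (N k f : ℕ) (δ : ℝ) (hδ : 0 < δ) (hN2 : 2 ≤ N) (hf1 : 1 ≤ f)
    (hkN : (N:ℝ) ≤ (k:ℝ)) :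
    (f:ℝ) * ((k:ℝ)/((k:ℝ)+(N:ℝ)-1)) ^
      (Nat.floor (4*(1 + max 0 (Real.log δ⁻¹)) * ((k:ℝ)/(N:ℝ) * (1 + Real.log f))) + 1) ≤ δ := by
  have hc1 : (1:ℝ) ≤ 1 + max 0 (Real.log δ⁻¹) := by
    have := le_max_left (0:ℝ) (Real.log δ⁻¹); linarith
  set c1 := 1 + max 0 (Real.log δ⁻¹) with hc1def
  have hNR : (2:ℝ) ≤ (N:ℝ) := by exact_mod_cast hN2
  have hkR : (2:ℝ) ≤ (k:ℝ) := le_trans hNR hkN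
  have hfR : (1:ℝ) ≤ (f:ℝ) := by exact_mod_cast hf1
  have hlogf : 0 ≤ Real.log f := Real.log_nonneg hfR
  have hden : (0:ℝ) < (k:ℝ)+(N:ℝ)-1 := by linarith
  have hq0 : (0:ℝ) < (k:ℝ)/((k:ℝ)+(N:ℝ)-1) := div_pos (by linarith) hden
  set y := 4*c1*((k:ℝ)/(N:ℝ) * (1 + Real.log f)) with hydef
  have hy0 : 0 ≤ y := by
    have h0 : (0:ℝ) ≤ (k:ℝ)/(N:ℝ) := div_nonneg (by linarith) (by linarith)
    have h1 : (0:ℝ) ≤ (k:ℝ)/(N:ℝ) * (1 + Real.log f) := by nlinarith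
    rw [hydef]
    exact mul_nonneg (by linarith) h1
  have hmy : y ≤ ((Nat.floor y + 1 : ℕ) : ℝ) := by
    push_cast
    linarith [Nat.lt_floor_add_one y]
  have hlogq : Real.log ((k:ℝ)/((k:ℝ)+(N:ℝ)-1)) ≤ -(((N:ℝ)-1)/((k:ℝ)+(N:ℝ)-1)) := by
    have h1 := Real.log_le_sub_one_of_pos hq0
    have h2 : (k:ℝ)/((k:ℝ)+(N:ℝ)-1) - 1 = -(((N:ℝ)-1)/((k:ℝ)+(N:ℝ)-1)) := by
      field_simp
      ring
    linarith [h2 ▸ h1]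
  have hlogq0 : Real.log ((k:ℝ)/((k:ℝ)+(N:ℝ)-1)) ≤ 0 := by
    have : (0:ℝ) ≤ ((N:ℝ)-1)/((k:ℝ)+(N:ℝ)-1) := div_nonneg (by linarith) (le_of_lt hden)
    linarith
  have hkey : (1:ℝ)/4 ≤ (k:ℝ)/(N:ℝ) * (((N:ℝ)-1)/((k:ℝ)+(N:ℝ)-1)) := by
    rw [div_mul_div_comm, le_div_iff₀ (by nlinarith)]
    nlinarith [mul_nonneg (sub_nonneg.mpr hkN) (by linarith : (0:ℝ) ≤ (N:ℝ)),
      mul_nonneg (by linarith : (0:ℝ) ≤ (k:ℝ)) (by linarith : (0:ℝ) ≤ (N:ℝ)-2)]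
  have hexp : ((k:ℝ)/((k:ℝ)+(N:ℝ)-1)) ^ (Nat.floor y + 1) ≤
      Real.exp (-(c1 * (1 + Real.log f))) := by
    rw [← Real.exp_log hq0, ← Real.exp_nat_mul, Real.exp_le_exp]
    calc ((Nat.floor y + 1 : ℕ) : ℝ) * Real.log ((k:ℝ)/((k:ℝ)+(N:ℝ)-1))
        ≤ y * Real.log ((k:ℝ)/((k:ℝ)+(N:ℝ)-1)) := by
          apply mul_le_mul_of_nonpos_right hmy hlogq0
      _ ≤ y * (-(((N:ℝ)-1)/((k:ℝ)+(N:ℝ)-1))) := mul_le_mul_of_nonneg_left hlogq hy0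
      _ = -(4*c1*(1 + Real.log f) * ((k:ℝ)/(N:ℝ) * (((N:ℝ)-1)/((k:ℝ)+(N:ℝ)-1)))) := by
          rw [hydef]; ring
      _ ≤ -(c1 * (1 + Real.log f)) := by
          have hc1f : (0:ℝ) ≤ 4*c1*(1 + Real.log f) := by nlinarith
          have := mul_le_mul_of_nonneg_left hkey hc1f
          nlinarith
  calc (f:ℝ) * ((k:ℝ)/((k:ℝ)+(N:ℝ)-1)) ^ (Nat.floor y + 1)
      ≤ (f:ℝ) * Real.exp (-(c1 * (1 + Real.log f))) :=
        mul_le_mul_of_nonneg_left hexp (by linarith)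
    _ = Real.exp (Real.log f - c1 * (1 + Real.log f)) := by
        rw [Real.exp_sub, Real.exp_log (by linarith : (0:ℝ) < (f:ℝ))]
        rw [div_eq_mul_inv, ← Real.exp_neg]
    _ ≤ δ := final_exp hlogf hδ

lemma bound_ii (N k f : ℕ) (C₀ δ : ℝ) (hC₀ : 0 < C₀) (hδ : 0 < δ) (hN2 : 2 ≤ N)
    (hk1 : 1 ≤ k) (hf1 : 1 ≤ f) (hkC : (k:ℝ) ≤ C₀*(N:ℝ)) :
    (f:ℝ) * ((k:ℝ)/((k:ℝ)+(N:ℝ)-1)) ^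
      (Nat.floor ((1 + max 0 (Real.log δ⁻¹))/(-Real.log (2*C₀/(2*C₀+1)))
        * (1 + Real.log f)) + 1) ≤ δ := by
  have hc1 : (1:ℝ) ≤ 1 + max 0 (Real.log δ⁻¹) := by
    have := le_max_left (0:ℝ) (Real.log δ⁻¹); linarith
  set c1 := 1 + max 0 (Real.log δ⁻¹) with hc1def
  set q₀ : ℝ := 2*C₀/(2*C₀+1) with hq₀def
  have hq₀0 : 0 < q₀ := div_pos (by linarith) (by linarith)
  have hq₀1 : q₀ < 1 := by
    rw [div_lt_one (by linarith)]; linarith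
  have hL₀ : 0 < -Real.log q₀ := by
    have := Real.log_neg hq₀0 hq₀1
    linarith
  have hNR : (2:ℝ) ≤ (N:ℝ) := by exact_mod_cast hN2
  have hkRpos : (1:ℝ) ≤ (k:ℝ) := by exact_mod_cast hk1
  have hfR : (1:ℝ) ≤ (f:ℝ) := by exact_mod_cast hf1
  have hlogf : 0 ≤ Real.log f := Real.log_nonneg hfR
  have hden : (0:ℝ) < (k:ℝ)+(N:ℝ)-1 := by linarith
  have hq0 : (0:ℝ) ≤ (k:ℝ)/((k:ℝ)+(N:ℝ)-1) := div_nonneg (by linarith) (le_of_lt hden)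
  have hqq₀ : (k:ℝ)/((k:ℝ)+(N:ℝ)-1) ≤ q₀ := by
    rw [hq₀def, div_le_div_iff₀ hden (by linarith)]
    nlinarith
  set y := c1/(-Real.log q₀) * (1 + Real.log f) with hydef
  have hy0 : 0 ≤ y := by
    apply mul_nonneg (div_nonneg (by linarith) (le_of_lt hL₀)) (by linarith)
  have hmy : y ≤ ((Nat.floor y + 1 : ℕ) : ℝ) := by
    push_cast
    linarith [Nat.lt_floor_add_one y]
  have hpow : ((k:ℝ)/((k:ℝ)+(N:ℝ)-1)) ^ (Nat.floor y + 1) ≤ q₀ ^ (Nat.floor y + 1) :=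
    pow_le_pow_left₀ hq0 hqq₀ _
  have hexp : q₀ ^ (Nat.floor y + 1) ≤ Real.exp (-(c1 * (1 + Real.log f))) := by
    rw [← Real.exp_log hq₀0, ← Real.exp_nat_mul, Real.exp_le_exp]
    have hlq₀ : Real.log q₀ ≤ 0 := by linarith
    calc ((Nat.floor y + 1 : ℕ) : ℝ) * Real.log q₀ ≤ y * Real.log q₀ :=
        mul_le_mul_of_nonpos_right hmy hlq₀
      _ = -(c1 * (1 + Real.log f)) := by
          rw [hydef]
          field_simp
          rw [div_self (ne_of_lt (by linarith : Real.log q₀ < 0))]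
  calc (f:ℝ) * ((k:ℝ)/((k:ℝ)+(N:ℝ)-1)) ^ (Nat.floor y + 1)
      ≤ (f:ℝ) * Real.exp (-(c1 * (1 + Real.log f))) := by
        apply mul_le_mul_of_nonneg_left (le_trans hpow hexp) (by linarith)
    _ = Real.exp (Real.log f - c1 * (1 + Real.log f)) := by
        rw [Real.exp_sub, Real.exp_log (by linarith : (0:ℝ) < (f:ℝ))]
        rw [div_eq_mul_inv, ← Real.exp_neg]
    _ ≤ δ := final_exp hlogf hδ

lemma lower_shared (N k f : ℕ) (c : ℝ) (hN : 1 ≤ N) (hk : 1 ≤ k) (hf1 : 1 ≤ f)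
    (hfN : f ≤ N) (hc0 : 0 < c) (hc14 : c ≤ 1/4) (hkN4 : 4*(N:ℝ) ≤ (k:ℝ)) :
    let x := c * ((k:ℝ)/(N:ℝ) * (1 + Real.log f))
    0 ≤ x ∧ Nat.ceil x ≤ k ∧ ((Nat.ceil x : ℕ) : ℝ) ≤ (k:ℝ)/2 := by
  intro x
  have hNR : (1:ℝ) ≤ (N:ℝ) := by exact_mod_cast hN
  have hkR : (4:ℝ) ≤ (k:ℝ) := by linarith
  have hfR : (1:ℝ) ≤ (f:ℝ) := by exact_mod_cast hf1
  have hlogf : 0 ≤ Real.log f := Real.log_nonneg hfR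
  have hlogfN : 1 + Real.log f ≤ (N:ℝ) := log_plus_le hf1 hfN
  have hkN0 : (0:ℝ) ≤ (k:ℝ)/(N:ℝ) := div_nonneg (by linarith) (by linarith)
  have hx0 : 0 ≤ x := by
    have : (0:ℝ) ≤ (k:ℝ)/(N:ℝ) * (1 + Real.log f) := by nlinarith
    exact mul_nonneg (le_of_lt hc0) this
  have hxk4 : x ≤ (k:ℝ)/4 := by
    have h1 : (k:ℝ)/(N:ℝ) * (1 + Real.log f) ≤ (k:ℝ)/(N:ℝ) * (N:ℝ) :=
      mul_le_mul_of_nonneg_left hlogfN hkN0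
    have h2 : (k:ℝ)/(N:ℝ) * (N:ℝ) = (k:ℝ) := by
      field_simp
    have h3 : x ≤ c * (k:ℝ) := by
      calc x ≤ c * ((k:ℝ)/(N:ℝ) * (N:ℝ)) := mul_le_mul_of_nonneg_left h1 (le_of_lt hc0)
        _ = c * (k:ℝ) := by rw [h2]
    calc x ≤ c * (k:ℝ) := h3
      _ ≤ 1/4 * (k:ℝ) := mul_le_mul_of_nonneg_right hc14 (by linarith)
      _ = (k:ℝ)/4 := by ring
  have hmk : Nat.ceil x ≤ k := by
    rw [Nat.ceil_le]
    calc x ≤ (k:ℝ)/4 := hxk4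
      _ ≤ (k:ℝ) := by linarith
  have hm2 : ((Nat.ceil x : ℕ) : ℝ) ≤ (k:ℝ)/2 := by
    have := Nat.ceil_lt_add_one hx0
    calc ((Nat.ceil x : ℕ) : ℝ) ≤ x + 1 := le_of_lt this
      _ ≤ (k:ℝ)/4 + (k:ℝ)/4 := by linarith
      _ = (k:ℝ)/2 := by ring
  exact ⟨hx0, hmk, hm2⟩

lemma lower_bounded_case (N k f B : ℕ) (δ c : ℝ) (hδ : 0 < δ)
    (hN : 1 ≤ N) (hk : 1 ≤ k) (hf1 : 1 ≤ f) (hfN : f ≤ N) (hfB : f ≤ B) (hB : 1 ≤ B)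
    (hc0 : 0 < c) (hc14 : c ≤ 1/4) (hcB : 2*c*(1+Real.log B) ≤ δ/4)
    (hkN4 : 4*(N:ℝ) ≤ (k:ℝ)) (hNk : (N:ℝ)/(k:ℝ) ≤ δ/16) :
    1 - δ ≤ urnProb N k
      (fun v => c * ((k:ℝ)/(N:ℝ) * (1 + Real.log f)) ≤ (maxCount f v : ℝ)) := by
  obtain ⟨hx0, hmk, hm2⟩ := lower_shared N k f c hN hk hf1 hfN hc0 hc14 hkN4
  set x := c * ((k:ℝ)/(N:ℝ) * (1 + Real.log f)) with hxdef
  set m := Nat.ceil x with hmdef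
  apply core_lower N k f m hN hf1 hfN hmk x δ (Nat.le_ceil x)
  -- remains : (1 - p)^f ≤ δ
  set p := ((urnSet N (k-m)).card : ℝ) / ((urnSet N k).card : ℝ) with hpdef
  have hA : (0:ℝ) < ((urnSet N k).card : ℝ) := by exact_mod_cast urnSet_card_pos hN k
  have hp0 : 0 ≤ p := div_nonneg (by positivity) (le_of_lt hA)
  have hp1 : p ≤ 1 := p_le_one N k m hN
  have hNR : (1:ℝ) ≤ (N:ℝ) := by exact_mod_cast hN
  have hkR : (4:ℝ) ≤ (k:ℝ) := by linarith
  have hmR : (m:ℝ) ≤ x + 1 := le_of_lt (Nat.ceil_lt_add_one hx0)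
  have hbern := p_bern N k m hN hmk
  have h1p : 1 - p ≤ (m:ℝ)*(((N:ℝ)-1)/((k:ℝ)-(m:ℝ)+(N:ℝ))) := by
    rw [hpdef]; linarith
  have hfrac : ((N:ℝ)-1)/((k:ℝ)-(m:ℝ)+(N:ℝ)) ≤ (N:ℝ)/((k:ℝ)/2) := by
    apply div_le_div₀ (by linarith) (by linarith) (by linarith)
    linarith
  have h2p : 1 - p ≤ (x+1)*((N:ℝ)/((k:ℝ)/2)) := by
    have hm0 : (0:ℝ) ≤ (m:ℝ) := by positivity
    have hfr0 : (0:ℝ) ≤ ((N:ℝ)-1)/((k:ℝ)-(m:ℝ)+(N:ℝ)) := by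
      apply div_nonneg (by linarith)
      linarith
    calc 1 - p ≤ (m:ℝ)*(((N:ℝ)-1)/((k:ℝ)-(m:ℝ)+(N:ℝ))) := h1p
      _ ≤ (m:ℝ)*((N:ℝ)/((k:ℝ)/2)) := mul_le_mul_of_nonneg_left hfrac hm0
      _ ≤ (x+1)*((N:ℝ)/((k:ℝ)/2)) := by
          apply mul_le_mul_of_nonneg_right hmR
          positivity
  have hxN : x*((N:ℝ)/((k:ℝ)/2)) = 2*c*(1+Real.log f) := by
    rw [hxdef]
    field_simp
  have hfB' : Real.log f ≤ Real.log B := by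
    apply Real.log_le_log (by exact_mod_cast hf1)
    exact_mod_cast hfB
  have hlogB : 0 ≤ Real.log B := Real.log_nonneg (by exact_mod_cast hB)
  have h3p : 1 - p ≤ δ/4 + δ/8 := by
    have e1 : (x+1)*((N:ℝ)/((k:ℝ)/2)) = 2*c*(1+Real.log f) + 2*((N:ℝ)/(k:ℝ)) := by
      rw [add_mul, hxN, one_mul]
      congr 1
      field_simp
    have e2 : 2*c*(1+Real.log f) ≤ 2*c*(1+Real.log B) := by nlinarith
    have e3 : 2*((N:ℝ)/(k:ℝ)) ≤ δ/8 := by linarith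
    rw [e1] at h2p
    linarith
  have hδf : (1-p)^f ≤ δ := by
    have h1 : (1-p)^f ≤ 1-p := pow_le_of_le_one (by linarith) (by linarith)
      (Nat.one_le_iff_ne_zero.mp hf1)
    linarith
  exact hδf

lemma lower_unbounded_case (N k f : ℕ) (δ : ℝ) (hδ : 0 < δ)
    (hN : 1 ≤ N) (hk : 1 ≤ k) (hf1 : 1 ≤ f) (hfN : f ≤ N)
    (hkN4 : 4*(N:ℝ) ≤ (k:ℝ))
    (hflarge : 3 + 2*Real.log (1 + max 0 (Real.log δ⁻¹)) ≤ Real.log f) :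
    1 - δ ≤ urnProb N k
      (fun v => (1/4 : ℝ) * ((k:ℝ)/(N:ℝ) * (1 + Real.log f)) ≤ (maxCount f v : ℝ)) := by
  obtain ⟨hx0, hmk, hm2⟩ := lower_shared N k f (1/4) hN hk hf1 hfN (by norm_num)
    (le_refl _) hkN4
  set x := (1/4 : ℝ) * ((k:ℝ)/(N:ℝ) * (1 + Real.log f)) with hxdef
  set m := Nat.ceil x with hmdef
  apply core_lower N k f m hN hf1 hfN hmk x δ (Nat.le_ceil x)
  set p := ((urnSet N (k-m)).card : ℝ) / ((urnSet N k).card : ℝ) with hpdef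
  have hA : (0:ℝ) < ((urnSet N k).card : ℝ) := by exact_mod_cast urnSet_card_pos hN k
  have hp0 : 0 ≤ p := div_nonneg (by positivity) (le_of_lt hA)
  have hp1 : p ≤ 1 := p_le_one N k m hN
  have hNR : (1:ℝ) ≤ (N:ℝ) := by exact_mod_cast hN
  have hkR : (4:ℝ) ≤ (k:ℝ) := by linarith
  have hfR : (1:ℝ) ≤ (f:ℝ) := by exact_mod_cast hf1
  have hlogf : 0 ≤ Real.log f := Real.log_nonneg hfR
  have hmR : (m:ℝ) ≤ x + 1 := le_of_lt (Nat.ceil_lt_add_one hx0)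
  have hm0 : (0:ℝ) ≤ (m:ℝ) := by positivity
  -- exponent bound
  have hfrac : ((N:ℝ)-1)/((k:ℝ)-(m:ℝ)+1) ≤ (N:ℝ)/((k:ℝ)/2) := by
    apply div_le_div₀ (by linarith) (by linarith) (by linarith)
    linarith
  have hE : (m:ℝ)*(((N:ℝ)-1)/((k:ℝ)-(m:ℝ)+1)) ≤ 3/2 + (1/2)*Real.log f := by
    have hxN : x*((N:ℝ)/((k:ℝ)/2)) = (1/2)*(1+Real.log f) := by
      rw [hxdef]
      field_simp
      ring
    have hNk : (N:ℝ)/(k:ℝ) ≤ 1/4 := by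
      rw [div_le_iff₀ (by linarith)]
      linarith
    have e1 : (x+1)*((N:ℝ)/((k:ℝ)/2)) = (1/2)*(1+Real.log f) + 2*((N:ℝ)/(k:ℝ)) := by
      rw [add_mul, hxN, one_mul]
      congr 1
      field_simp
    calc (m:ℝ)*(((N:ℝ)-1)/((k:ℝ)-(m:ℝ)+1))
        ≤ (m:ℝ)*((N:ℝ)/((k:ℝ)/2)) := mul_le_mul_of_nonneg_left hfrac hm0
      _ ≤ (x+1)*((N:ℝ)/((k:ℝ)/2)) := by
          apply mul_le_mul_of_nonneg_right hmR
          positivity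
      _ = (1/2)*(1+Real.log f) + 2*((N:ℝ)/(k:ℝ)) := e1
      _ ≤ 3/2 + (1/2)*Real.log f := by linarith
  have hpexp := p_exp N k m hN hmk
  have hplow : Real.exp (-(3/2) - (1/2)*Real.log f) ≤ p := by
    refine le_trans ?_ hpexp
    apply Real.exp_le_exp.mpr
    linarith
  set K := 1 + max 0 (Real.log δ⁻¹) with hKdef
  have hK1 : (1:ℝ) ≤ K := by
    have := le_max_left (0:ℝ) (Real.log δ⁻¹); rw [hKdef]; linarith
  have hfp : K ≤ (f:ℝ) * p := by
    have h1 : Real.exp ((1/2)*Real.log f - 3/2) ≤ (f:ℝ) * p := by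
      calc Real.exp ((1/2)*Real.log f - 3/2)
          = Real.exp (Real.log f) * Real.exp (-(3/2) - (1/2)*Real.log f) := by
            rw [← Real.exp_add]; ring_nf
        _ = (f:ℝ) * Real.exp (-(3/2) - (1/2)*Real.log f) := by
            rw [Real.exp_log (by linarith : (0:ℝ) < (f:ℝ))]
        _ ≤ (f:ℝ) * p := mul_le_mul_of_nonneg_left hplow (by linarith)
    have h2 : K ≤ Real.exp ((1/2)*Real.log f - 3/2) := by
      calc K = Real.exp (Real.log K) := (Real.exp_log (by linarith)).symm
        _ ≤ Real.exp ((1/2)*Real.log f - 3/2) := by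
            apply Real.exp_le_exp.mpr
            linarith
    exact le_trans h2 h1
  -- conclude
  have h1p : 1 - p ≤ Real.exp (-p) := by
    have := Real.add_one_le_exp (-p)
    linarith
  calc (1 - p)^f ≤ (Real.exp (-p))^f := pow_le_pow_left₀ (by linarith) h1p f
    _ = Real.exp ((f:ℕ) * (-p)) := (Real.exp_nat_mul _ f).symm
    _ ≤ Real.exp (-K) := by
        apply Real.exp_le_exp.mpr
        nlinarith
    _ ≤ δ := by
        rw [hKdef]
        exact exp_helper hδ

open Filter

theorem polya_max_asymptotics (N k f : ℕ → ℕ)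
    (hN : ∀ n, 1 ≤ N n) (hk : ∀ n, 1 ≤ k n)
    (hf1 : ∀ n, 1 ≤ f n) (hfN : ∀ n, f n ≤ N n)
    (hNtop : Tendsto N atTop atTop)
    (hfreg : (∃ B : ℕ, ∀ n, f n ≤ B) ∨ Tendsto f atTop atTop) :
    -- (i) if k = ω(N) then X^* = Θ_p((k/N)·(1 + log f))
    ((Tendsto (fun n => (k n : ℝ) / (N n : ℝ)) atTop atTop →
      (∀ δ : ℝ, 0 < δ → ∃ C : ℝ, 0 < C ∧ ∃ M : ℕ, ∀ n ≥ M,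
          1 - δ ≤ urnProb (N n) (k n)
            (fun v => (maxCount (f n) v : ℝ) ≤
              C * ((k n : ℝ) / (N n : ℝ) * (1 + Real.log (f n))))) ∧
      (∀ δ : ℝ, 0 < δ → ∃ c : ℝ, 0 < c ∧ ∃ M : ℕ, ∀ n ≥ M,
          1 - δ ≤ urnProb (N n) (k n)
            (fun v => c * ((k n : ℝ) / (N n : ℝ) * (1 + Real.log (f n))) ≤
              (maxCount (f n) v : ℝ)))) ∧
    -- (ii) if k = O(N) then X^* = O_p(1 + log f)
     ((∃ C : ℝ, 0 < C ∧ ∀ n, (k n : ℝ) ≤ C * (N n : ℝ)) →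
      ∀ δ : ℝ, 0 < δ → ∃ C : ℝ, 0 < C ∧ ∃ M : ℕ, ∀ n ≥ M,
          1 - δ ≤ urnProb (N n) (k n)
            (fun v => (maxCount (f n) v : ℝ) ≤ C * (1 + Real.log (f n))))) := by
  constructor
  · intro hkNtop
    constructor
    · -- part (i), upper bound
      intro δ hδ
      have hc1 : (1:ℝ) ≤ 1 + max 0 (Real.log δ⁻¹) := by
        have := le_max_left (0:ℝ) (Real.log δ⁻¹); linarith
      refine ⟨4*(1 + max 0 (Real.log δ⁻¹)), by linarith, ?_⟩
      have hev : ∀ᶠ n in atTop, 2 ≤ N n ∧ (1:ℝ) ≤ (k n : ℝ)/(N n : ℝ) :=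
        (hNtop.eventually_ge_atTop 2).and (hkNtop.eventually_ge_atTop 1)
      obtain ⟨M, hM⟩ := eventually_atTop.mp hev
      refine ⟨M, fun n hn => ?_⟩
      obtain ⟨hN2, hk1⟩ := hM n hn
      have hNpos : (0:ℝ) < (N n : ℝ) := by exact_mod_cast hN n
      have hkN : (N n : ℝ) ≤ (k n : ℝ) := by
        have := (le_div_iff₀ hNpos).mp hk1
        linarith
      have hlogf : 0 ≤ Real.log (f n) := by
        apply Real.log_nonneg
        exact_mod_cast hf1 n
      apply core_upper (N n) (k n) (f n) (hN n) (hk n) (hf1 n) δ _ (le_of_lt hδ)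
      · have hkn0 : (0:ℝ) ≤ (k n : ℝ)/(N n : ℝ) := by positivity
        have : (0:ℝ) ≤ (k n : ℝ)/(N n : ℝ) * (1 + Real.log (f n)) := by nlinarith
        nlinarith
      · exact bound_i_upper (N n) (k n) (f n) δ hδ hN2 (hf1 n) hkN
    · -- part (i), lower bound
      intro δ hδ
      rcases hfreg with ⟨B, hB⟩ | hftop
      · have hB1 : 1 ≤ B := le_trans (hf1 0) (hB 0)
        have hlogB : 0 ≤ Real.log B := by
          apply Real.log_nonneg; exact_mod_cast hB1
        have hc0 : (0:ℝ) < min (1/4 : ℝ) (δ/(8*(1+Real.log B))) := by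
          apply lt_min (by norm_num)
          positivity
        refine ⟨min (1/4 : ℝ) (δ/(8*(1+Real.log B))), hc0, ?_⟩
        have hev : ∀ᶠ n in atTop, (4:ℝ) ≤ (k n : ℝ)/(N n : ℝ) ∧
            (16/δ:ℝ) ≤ (k n : ℝ)/(N n : ℝ) :=
          (hkNtop.eventually_ge_atTop 4).and (hkNtop.eventually_ge_atTop (16/δ))
        obtain ⟨M, hM⟩ := eventually_atTop.mp hev
        refine ⟨M, fun n hn => ?_⟩
        obtain ⟨h4, h16⟩ := hM n hn
        have hNpos : (0:ℝ) < (N n : ℝ) := by exact_mod_cast hN n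
        have h4N : 4*(N n : ℝ) ≤ (k n : ℝ) := by
          have := (le_div_iff₀ hNpos).mp h4
          linarith
        have hkpos : (0:ℝ) < (k n : ℝ) := by linarith
        have hNk : (N n : ℝ)/(k n : ℝ) ≤ δ/16 := by
          have h1 := (le_div_iff₀ hNpos).mp h16
          rw [div_le_div_iff₀ hkpos (by norm_num : (0:ℝ) < 16)]
          have h2 : (16/δ) * (N n : ℝ) * δ ≤ (k n : ℝ) * δ := by
            apply mul_le_mul_of_nonneg_right h1 (le_of_lt hδ)
          have h3 : (16/δ) * (N n : ℝ) * δ = 16 * (N n : ℝ) := by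
            field_simp
          nlinarith
        apply lower_bounded_case (N n) (k n) (f n) B δ _ hδ (hN n) (hk n) (hf1 n)
          (hfN n) (hB n) hB1 hc0 (min_le_left _ _) ?_ h4N hNk
        have hcB := min_le_right (1/4 : ℝ) (δ/(8*(1+Real.log B)))
        have hpos : (0:ℝ) < 1 + Real.log B := by linarith
        have : 2 * (δ/(8*(1+Real.log B))) * (1+Real.log B) = δ/4 := by
          field_simp
          ring
        nlinarith [mul_le_mul_of_nonneg_right hcB (le_of_lt hpos)]
      · refine ⟨1/4, by norm_num, ?_⟩
        have hlogtend : Tendsto (fun n => Real.log (f n)) atTop atTop :=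
          Real.tendsto_log_atTop.comp (tendsto_natCast_atTop_atTop.comp hftop)
        have hev : ∀ᶠ n in atTop, (4:ℝ) ≤ (k n : ℝ)/(N n : ℝ) ∧
            3 + 2*Real.log (1 + max 0 (Real.log δ⁻¹)) ≤ Real.log (f n) :=
          (hkNtop.eventually_ge_atTop 4).and
            (hlogtend.eventually_ge_atTop (3 + 2*Real.log (1 + max 0 (Real.log δ⁻¹))))
        obtain ⟨M, hM⟩ := eventually_atTop.mp hev
        refine ⟨M, fun n hn => ?_⟩
        obtain ⟨h4, hfl⟩ := hM n hn
        have hNpos : (0:ℝ) < (N n : ℝ) := by exact_mod_cast hN n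
        have h4N : 4*(N n : ℝ) ≤ (k n : ℝ) := by
          have := (le_div_iff₀ hNpos).mp h4
          linarith
        exact lower_unbounded_case (N n) (k n) (f n) δ hδ (hN n) (hk n) (hf1 n)
          (hfN n) h4N hfl
  · -- part (ii)
    rintro ⟨C₀, hC₀, hkC⟩ δ hδ
    have hc1 : (1:ℝ) ≤ 1 + max 0 (Real.log δ⁻¹) := by
      have := le_max_left (0:ℝ) (Real.log δ⁻¹); linarith
    have hq₀0 : (0:ℝ) < 2*C₀/(2*C₀+1) := div_pos (by linarith) (by linarith)
    have hq₀1 : 2*C₀/(2*C₀+1) < 1 := by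
      rw [div_lt_one (by linarith)]; linarith
    have hL₀ : 0 < -Real.log (2*C₀/(2*C₀+1)) := by
      have := Real.log_neg hq₀0 hq₀1
      linarith
    refine ⟨(1 + max 0 (Real.log δ⁻¹))/(-Real.log (2*C₀/(2*C₀+1))),
      div_pos (by linarith) hL₀, ?_⟩
    obtain ⟨M, hM⟩ := eventually_atTop.mp (hNtop.eventually_ge_atTop 2)
    refine ⟨M, fun n hn => ?_⟩
    have hN2 := hM n hn
    have hlogf : 0 ≤ Real.log (f n) := by
      apply Real.log_nonneg
      exact_mod_cast hf1 n
    apply core_upper (N n) (k n) (f n) (hN n) (hk n) (hf1 n) δ _ (le_of_lt hδ)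
    · have h1 : (0:ℝ) ≤ (1 + max 0 (Real.log δ⁻¹))/(-Real.log (2*C₀/(2*C₀+1))) :=
        le_of_lt (div_pos (by linarith) hL₀)
      nlinarith
    · exact bound_ii (N n) (k n) (f n) C₀ δ hC₀ hδ hN2 (hk n) (hf1 n) (hkC n)
end

section
/- For all integers N ≥ 1 and k ≥ 1, in the Pólya urn model with N colours and k draws, the colour counts satisfy Σ_{i=1}^{N} P(X_i ≤ 1) ≤ 2N²/k. -/
attribute [local instance] Classical.propDecidable

lemma mem_urnSet_iff {N k : ℕ} {v : Fin N → ℕ} : v ∈ urnSet N k ↔ ∑ i, v i = k := by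
  simp only [urnSet, Finset.mem_filter, Fintype.mem_piFinset, Finset.mem_range,
    Nat.lt_succ_iff]
  constructor
  · exact fun h => h.2
  · intro h
    refine ⟨fun i => ?_, h⟩
    calc v i ≤ ∑ j, v j := Finset.single_le_sum (fun j _ => Nat.zero_le _) (Finset.mem_univ i)
    _ = k := h

/-- Reduction of a fiber of `urnSet` to a smaller urn set. -/
lemma card_urnSet_filter_eq (n k c : ℕ) (hc : c ≤ k) (i : Fin (n + 1)) :
    ((urnSet (n + 1) k).filter fun v => v i = c).card = (urnSet n (k - c)).card := by
  refine Finset.card_bij' (fun v _ => fun j => v (i.succAbove j))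
    (fun w _ => i.insertNth c w) ?_ ?_ ?_ ?_
  · intro v hv
    rw [Finset.mem_filter] at hv
    obtain ⟨hv1, hv2⟩ := hv
    rw [mem_urnSet_iff] at hv1 ⊢
    have h := Fin.sum_univ_succAbove v i
    rw [hv1, hv2] at h
    set S := ∑ j : Fin n, v (i.succAbove j) with hS
    omega
  · intro w hw
    rw [mem_urnSet_iff] at hw
    rw [Finset.mem_filter, mem_urnSet_iff]
    refine ⟨?_, by simp⟩
    rw [Fin.sum_univ_succAbove (i.insertNth c w) i]
    simp only [Fin.insertNth_apply_same, Fin.insertNth_apply_succAbove]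
    set S := ∑ j : Fin n, w j with hS
    omega
  · intro v hv
    rw [Finset.mem_filter] at hv
    funext j
    refine Fin.succAboveCases i ?_ ?_ j
    · simp [Fin.insertNth_apply_same, hv.2]
    · intro j'
      simp [Fin.insertNth_apply_succAbove]
  · intro w hw
    funext j
    simp [Fin.insertNth_apply_succAbove]

lemma sum_choose_aux (N k : ℕ) :
    ∑ j ∈ Finset.range (k + 1), (N + j - 1).choose j = (N + k).choose k := by
  induction k with
  | zero => simp
  | succ k ih =>
    rw [Finset.sum_range_succ, ih]
    have h1 : N + (k + 1) - 1 = N + k := by omega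
    rw [h1, ← Nat.choose_succ_succ]
    rfl

lemma card_urnSet (N k : ℕ) : (urnSet N k).card = (N + k - 1).choose k := by
  induction N generalizing k with
  | zero =>
    cases k with
    | zero =>
      have h : urnSet 0 0 = {(fun _ => 0 : Fin 0 → ℕ)} := by
        ext v
        simp only [mem_urnSet_iff, Finset.mem_singleton]
        constructor
        · intro _; funext j; exact absurd j.2 (by omega)
        · intro h; subst h; simp
      rw [h]; simp
    | succ k =>
      have h : urnSet 0 (k + 1) = ∅ := by
        ext v
        simp [mem_urnSet_iff]
      rw [h]
      have h0 : (0 + (k + 1) - 1).choose (k + 1) = 0 :=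
        Nat.choose_eq_zero_of_lt (by omega)
      rw [h0]
      simp
  | succ n ih =>
    have key : (urnSet (n + 1) k).card
        = ∑ c ∈ Finset.range (k + 1), ((urnSet (n + 1) k).filter fun v => v 0 = c).card := by
      refine Finset.card_eq_sum_card_fiberwise (fun v hv => ?_)
      rw [Finset.mem_coe, mem_urnSet_iff] at hv
      rw [Finset.mem_coe, Finset.mem_range, Nat.lt_succ_iff]
      calc v 0 ≤ ∑ j, v j := Finset.single_le_sum (fun j _ => Nat.zero_le _) (Finset.mem_univ 0)
      _ = k := hv
    rw [key]
    have h2 : ∀ c ∈ Finset.range (k + 1),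
        ((urnSet (n + 1) k).filter fun v => v 0 = c).card = (n + (k - c) - 1).choose (k - c) := by
      intro c hc
      rw [Finset.mem_range, Nat.lt_succ_iff] at hc
      rw [card_urnSet_filter_eq n k c hc 0, ih]
    rw [Finset.sum_congr rfl h2]
    have h3 : ∀ c ∈ Finset.range (k + 1),
        (n + (k - c) - 1).choose (k - c) = (n + (k + 1 - 1 - c) - 1).choose (k + 1 - 1 - c) := by
      intro c hc
      have e : k - c = k + 1 - 1 - c := by clear * -; omega
      rw [e]
    rw [Finset.sum_congr rfl h3, Finset.sum_range_reflect (fun j => (n + j - 1).choose j) (k + 1),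
      sum_choose_aux]
    have : n + 1 + k - 1 = n + k := by clear * -; omega
    rw [this]

lemma key_nat_ineq (n m : ℕ) :
    (m + 1) * ((n + m).choose (m + 1) + (n + m - 1).choose m)
      ≤ 2 * (n + 1) * ((n + m + 1).choose (m + 1)) := by
  have hC : (n + m + 1).choose (m + 1) = (n + m).choose m + (n + m).choose (m + 1) :=
    Nat.choose_succ_succ _ _
  have hA : (n + m).choose (m + 1) * (m + 1) = (n + m).choose m * n := by
    have := Nat.choose_succ_right_eq (n + m) m
    rwa [Nat.add_sub_cancel] at this
  rcases Nat.eq_zero_or_pos (n + m) with h | h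
  · obtain ⟨hn, hm⟩ : n = 0 ∧ m = 0 := by omega
    subst hn; subst hm; simp
  · -- B ≤ A
    obtain ⟨s, hs⟩ : ∃ s, n + m = s + 1 := ⟨n + m - 1, by omega⟩
    have hB : (n + m - 1).choose m ≤ (n + m).choose (m + 1) := by
      rw [hs, Nat.choose_succ_succ]
      simp [Nat.le_add_right]
    set A := (n + m).choose (m + 1)
    set B := (n + m - 1).choose m
    set D := (n + m).choose m
    nlinarith [hA, hB, hC]

theorem polya_sum_prob_le_one (N k : ℕ) (hN : 1 ≤ N) (hk : 1 ≤ k) :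
    ∑ i : Fin N, urnProb N k (fun v => v i ≤ 1) ≤ 2 * (N : ℝ) ^ 2 / k := by
  obtain ⟨n, rfl⟩ : ∃ n, N = n + 1 := ⟨N - 1, by omega⟩
  obtain ⟨m, rfl⟩ : ∃ m, k = m + 1 := ⟨k - 1, by omega⟩
  set A := (n + m).choose (m + 1) with hA
  set B := (n + m - 1).choose m with hB
  set C := (n + m + 1).choose (m + 1) with hCdef
  have hCcard : (urnSet (n + 1) (m + 1)).card = C := by
    rw [card_urnSet]; congr 1; omega
  have hCpos : 0 < C := Nat.choose_pos (by omega)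
  have hfilter : ∀ i : Fin (n + 1),
      ((urnSet (n + 1) (m + 1)).filter fun v => v i ≤ 1).card = B + A := by
    intro i
    have hpred : (urnSet (n + 1) (m + 1)).filter (fun v => v i ≤ 1)
        = (urnSet (n + 1) (m + 1)).filter fun v => v i = 0 ∨ v i = 1 :=
      Finset.filter_congr fun v _ => by simp [Nat.le_one_iff_eq_zero_or_eq_one]
    rw [hpred, Finset.filter_or, Finset.card_union_of_disjoint]
    · rw [card_urnSet_filter_eq n (m + 1) 0 (by omega) i,
        card_urnSet_filter_eq n (m + 1) 1 (by omega) i, card_urnSet, card_urnSet]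
      have e1 : n + (m + 1 - 0) - 1 = n + m := by omega
      have e2 : m + 1 - 0 = m + 1 := by omega
      have e3 : n + (m + 1 - 1) - 1 = n + m - 1 := by omega
      have e4 : m + 1 - 1 = m := by omega
      rw [e1, e2, e3, e4, ← hA, ← hB]
      exact Nat.add_comm _ _
    · rw [Finset.disjoint_left]
      intro v hv1 hv2
      rw [Finset.mem_filter] at hv1 hv2
      omega
  have hterm : ∀ i : Fin (n + 1),
      urnProb (n + 1) (m + 1) (fun v => v i ≤ 1) = ((B + A : ℕ) : ℝ) / C := by
    intro i
    rw [urnProb, hCcard, Finset.filter_congr_decidable, hfilter i]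
  rw [Finset.sum_congr rfl (fun i _ => hterm i), Finset.sum_const, Finset.card_univ,
    Fintype.card_fin, nsmul_eq_mul]
  have hkey := key_nat_ineq n m
  have hCpos' : (0 : ℝ) < (C : ℝ) := by exact_mod_cast hCpos
  have hkpos : (0 : ℝ) < ((m : ℝ) + 1) := by positivity
  rw [mul_div_assoc', div_le_div_iff₀ hCpos' (by push_cast; linarith)]
  push_cast
  have hkeyR : ((m : ℝ) + 1) * ((A : ℝ) + (B : ℝ)) ≤ 2 * ((n : ℝ) + 1) * (C : ℝ) := by
    exact_mod_cast hkey
  have hN0 : (0 : ℝ) ≤ (n : ℝ) + 1 := by positivity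
  nlinarith [hkeyR, hN0, hCpos']
end

section
/- Let T and S be types, let F : T → S be a function, let P be a predicate on T, and for each n ∈ ℕ let A(n) be a nonempty finite set of elements of T. Call a sequence s : ℕ → S feasible if for every n there exists H ∈ A(n) with F(H) = s(n). For a feasible sequence s and each n, define the conditional proportion q_n(s) := |{H ∈ A(n) : F(H) = s(n) and P(H)}| / |{H ∈ A(n) : F(H) = s(n)}|. If for every feasible sequence s one has q_n(s) → 1 as n → ∞, then |{H ∈ A(n) : P(H)}| / |A(n)| → 1 as n → ∞. -/
attribute [local instance] Classical.propDecidable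

open Filter

theorem conditional_whp_implies_whp {T S : Type*} (F : T → S) (P : T → Prop)
    (A : ℕ → Finset T) (hA : ∀ n, (A n).Nonempty)
    (h : ∀ s : ℕ → S, (∀ n, ∃ H ∈ A n, F H = s n) →
      Tendsto (fun n =>
          (((A n).filter fun H => F H = s n ∧ P H).card : ℝ) /
            (((A n).filter fun H => F H = s n).card : ℝ))
        atTop (nhds 1)) :
    Tendsto (fun n => (((A n).filter P).card : ℝ) / ((A n).card : ℝ))
      atTop (nhds 1) := by
  by_contra hcon
  rw [Metric.tendsto_atTop] at hcon
  push_neg at hcon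
  obtain ⟨ε, hε, hbad⟩ := hcon
  have key : ∀ n, ∃ v ∈ (A n).image F,
      (((A n).filter fun H => F H = v ∧ P H).card : ℝ) /
        (((A n).filter fun H => F H = v).card : ℝ) ≤
      (((A n).filter P).card : ℝ) / ((A n).card : ℝ) := by
    intro n
    by_contra hc
    push_neg at hc
    set p : ℝ := (((A n).filter P).card : ℝ) / ((A n).card : ℝ) with hp
    have hApos : (0:ℝ) < ((A n).card : ℝ) := by
      exact_mod_cast Finset.card_pos.mpr (hA n)
    have hsum1 : ((A n).card : ℝ) =
        ∑ v ∈ (A n).image F, (((A n).filter fun H => F H = v).card : ℝ) := by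
      rw [← Nat.cast_sum]
      exact_mod_cast Finset.card_eq_sum_card_fiberwise
        (fun x hx => Finset.mem_image_of_mem F hx)
    have hsum2 : (((A n).filter P).card : ℝ) =
        ∑ v ∈ (A n).image F, (((A n).filter fun H => F H = v ∧ P H).card : ℝ) := by
      rw [← Nat.cast_sum, Nat.cast_inj]
      have h1 : ((A n).filter P).card =
          ∑ v ∈ (A n).image F, (((A n).filter P).filter fun H => F H = v).card :=
        Finset.card_eq_sum_card_fiberwise
          (fun x hx => Finset.mem_image_of_mem F (Finset.mem_filter.mp hx).1)
      rw [h1]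
      refine Finset.sum_congr rfl fun v _ => ?_
      congr 1
      rw [Finset.filter_filter]
      exact Finset.filter_congr fun x _ => by tauto
    have hlt : ∀ v ∈ (A n).image F,
        p * (((A n).filter fun H => F H = v).card : ℝ) <
          (((A n).filter fun H => F H = v ∧ P H).card : ℝ) := by
      intro v hv
      have hcpos : (0:ℝ) < (((A n).filter fun H => F H = v).card : ℝ) := by
        obtain ⟨a, ha, hfa⟩ := Finset.mem_image.mp hv
        have : a ∈ (A n).filter fun H => F H = v := Finset.mem_filter.mpr ⟨ha, hfa⟩
        exact_mod_cast Finset.card_pos.mpr ⟨a, this⟩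
      have := hc v hv
      calc p * (((A n).filter fun H => F H = v).card : ℝ)
          < ((((A n).filter fun H => F H = v ∧ P H).card : ℝ) /
              (((A n).filter fun H => F H = v).card : ℝ)) *
            (((A n).filter fun H => F H = v).card : ℝ) := by
            exact mul_lt_mul_of_pos_right this hcpos
        _ = (((A n).filter fun H => F H = v ∧ P H).card : ℝ) := by
            field_simp
    have himne : ((A n).image F).Nonempty := (hA n).image F
    have hstrict : ∑ v ∈ (A n).image F, p * (((A n).filter fun H => F H = v).card : ℝ) <
        ∑ v ∈ (A n).image F, (((A n).filter fun H => F H = v ∧ P H).card : ℝ) :=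
      Finset.sum_lt_sum_of_nonempty himne hlt
    rw [← Finset.mul_sum, ← hsum1, ← hsum2] at hstrict
    rw [hp, div_mul_cancel₀ _ (ne_of_gt hApos)] at hstrict
    exact lt_irrefl _ hstrict
  choose v hv hq using key
  have hfeas : ∀ n, ∃ H ∈ A n, F H = v n := fun n => Finset.mem_image.mp (hv n)
  have htend := h v hfeas
  rw [Metric.tendsto_atTop] at htend
  obtain ⟨N, hN⟩ := htend ε hε
  obtain ⟨n, hnN, hdist⟩ := hbad N
  have hp1 : (((A n).filter P).card : ℝ) / ((A n).card : ℝ) ≤ 1 := by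
    have hApos : (0:ℝ) < ((A n).card : ℝ) := by
      exact_mod_cast Finset.card_pos.mpr (hA n)
    rw [div_le_one hApos]
    exact_mod_cast Finset.card_filter_le _ _
  have hple : (((A n).filter P).card : ℝ) / ((A n).card : ℝ) ≤ 1 - ε := by
    have : |(((A n).filter P).card : ℝ) / ((A n).card : ℝ) - 1| ≥ ε := by
      rw [Real.dist_eq] at hdist; linarith
    rw [abs_sub_comm, abs_of_nonneg (by linarith)] at this
    linarith
  have hq0 : (0:ℝ) ≤ (((A n).filter fun H => F H = v n ∧ P H).card : ℝ) /
      (((A n).filter fun H => F H = v n).card : ℝ) := by positivity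
  have := hN n hnN
  rw [Real.dist_eq] at this
  have hqle := hq n
  rw [abs_sub_comm, abs_of_nonneg (by linarith)] at this
  linarith
end
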